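/- arXiv:1712.00686 — 4 statements merged into one kernel-verified Lean document; each statement's English description precedes it below -/
import Mathlib

section
/- Let D be a finite multidigraph and let e=(u,v) be a non-loop arc of D such that D has no loop at u and no loop at v. Then σ(D;x) = σ(D_{-e};x) + x·σ(D_{/e};x) − x·σ(D_{†e};x). -/
open Classical

/-- A finite multidigraph: a finite set `V` of vertices (natural numbers),
a finite set `A` of arc identifiers, and a map `ends` assigning to each arc
identifier its (source, target) pair of vertices.  Parallel arcs are distinct
identifiers with the same endpoints; loops are arcs with equal endpoints. -/
structure MDigraph where
  V : Finset ℕ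
  A : Finset ℕ
  ends : ℕ → ℕ × ℕ

namespace MDigraph

/-- Every arc has both endpoints in the vertex set. -/
def WellFormed (D : MDigraph) : Prop :=
  ∀ a ∈ D.A, (D.ends a).1 ∈ D.V ∧ (D.ends a).2 ∈ D.V

/-- An arc is a loop if its source equals its target. -/
def IsLoop (D : MDigraph) (e : ℕ) : Prop := (D.ends e).1 = (D.ends e).2

/-- Arc deletion `D_{-e}`. -/
def delArc (D : MDigraph) (e : ℕ) : MDigraph := ⟨D.V, D.A.erase e, D.ends⟩

/-- Arc contraction `D_{/e}`.  For a non-loop arc `e = (u,v)`: merge `u` and `v`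
into a single vertex (named `u`), removing exactly the arcs of the form `(u,x)`
and `(y,v)`.  For a loop `e = (u,u)`: delete `u` together with all incident arcs. -/
noncomputable def contractArc (D : MDigraph) (e : ℕ) : MDigraph :=
  let u := (D.ends e).1
  let v := (D.ends e).2
  if u = v then
    ⟨D.V.erase u, D.A.filter (fun a => (D.ends a).1 ≠ u ∧ (D.ends a).2 ≠ u), D.ends⟩
  else
    ⟨D.V.erase v, D.A.filter (fun a => (D.ends a).1 ≠ u ∧ (D.ends a).2 ≠ v),
      fun a => ((if (D.ends a).1 = v then u else (D.ends a).1),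
                (if (D.ends a).2 = v then u else (D.ends a).2))⟩

/-- Arc extraction `D_{†e}`: delete both endpoints of `e` and all arcs incident to them. -/
noncomputable def extractArc (D : MDigraph) (e : ℕ) : MDigraph :=
  let u := (D.ends e).1
  let v := (D.ends e).2
  ⟨(D.V.erase u).erase v,
   D.A.filter (fun a =>
     (D.ends a).1 ≠ u ∧ (D.ends a).1 ≠ v ∧ (D.ends a).2 ≠ u ∧ (D.ends a).2 ≠ v),
   D.ends⟩

/-- Add one new arc with endpoints `p` (using a fresh arc identifier). -/
noncomputable def addArc (D : MDigraph) (p : ℕ × ℕ) : MDigraph :=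
  ⟨D.V, insert (D.A.sup id + 1) D.A, Function.update D.ends (D.A.sup id + 1) p⟩

/-- Vertex deletion `D_{-v}`. -/
noncomputable def delVertex (D : MDigraph) (v : ℕ) : MDigraph :=
  ⟨D.V.erase v, D.A.filter (fun a => (D.ends a).1 ≠ v ∧ (D.ends a).2 ≠ v), D.ends⟩

/-- Vertex contraction `D_{/v}`: delete `v`, and for every arc `(u,v)` into `v`
and every arc `(v,w)` out of `v` add a new arc `(u,w)`; thus the multiplicity of
a new arc `(u,w)` is the multiplicity of `(u,v)` times that of `(v,w)`. -/
noncomputable def contractVertex (D : MDigraph) (v : ℕ) : MDigraph :=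
  ⟨D.V.erase v,
   ((D.A.filter (fun a => (D.ends a).1 ≠ v ∧ (D.ends a).2 ≠ v)).image (fun a => 2 * a)) ∪
     (((D.A.filter (fun a => (D.ends a).2 = v)) ×ˢ (D.A.filter (fun a => (D.ends a).1 = v))).image
       (fun p => 2 * Nat.pair p.1 p.2 + 1)),
   fun n =>
     if n % 2 = 0 then D.ends (n / 2)
     else ((D.ends (Nat.unpair ((n - 1) / 2)).1).1, (D.ends (Nat.unpair ((n - 1) / 2)).2).2)⟩

/-- The arc-less digraph on `n` vertices. -/
def emptyD (n : ℕ) : MDigraph := ⟨Finset.range n, ∅, fun _ => (0, 0)⟩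

/-- Disjoint union of two multidigraphs (vertices and arcs relabelled evenly/oddly). -/
noncomputable def disjUnion (D₁ D₂ : MDigraph) : MDigraph :=
  ⟨(D₁.V.image (fun v => 2 * v)) ∪ (D₂.V.image (fun v => 2 * v + 1)),
   (D₁.A.image (fun a => 2 * a)) ∪ (D₂.A.image (fun a => 2 * a + 1)),
   fun n =>
     if n % 2 = 0 then (2 * (D₁.ends (n / 2)).1, 2 * (D₁.ends (n / 2)).2)
     else (2 * (D₂.ends (n / 2)).1 + 1, 2 * (D₂.ends (n / 2)).2 + 1)⟩

/-- Isomorphism of multidigraphs. -/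
def Iso (D₁ D₂ : MDigraph) : Prop :=
  ∃ φ ψ : ℕ → ℕ, Set.BijOn φ ↑D₁.V ↑D₂.V ∧ Set.BijOn ψ ↑D₁.A ↑D₂.A ∧
    ∀ a ∈ D₁.A, D₂.ends (ψ a) = (φ (D₁.ends a).1, φ (D₁.ends a).2)

/-- `C` is (the arc set of) a directed cycle of length `k` in `D`: `k` distinct arcs
forming a closed directed walk through `k` distinct vertices (`k ≥ 1`;
a loop is a directed cycle of length 1). -/
def IsCycle (D : MDigraph) (C : Finset ℕ) (k : ℕ) : Prop :=
  1 ≤ k ∧ ∃ v a : ℕ → ℕ,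
    (∀ i j, i < k → j < k → v i = v j → i = j) ∧
    (∀ i j, i < k → j < k → a i = a j → i = j) ∧
    (∀ i, i < k → a i ∈ D.A ∧ D.ends (a i) = (v i, v ((i + 1) % k))) ∧
    C = (Finset.range k).image a

/-- `P` is (the arc set of) a directed path of length `k` in `D`: `k` distinct arcs
forming a directed walk through `k+1` distinct vertices (`k ≥ 1`). -/
def IsPath (D : MDigraph) (P : Finset ℕ) (k : ℕ) : Prop :=
  1 ≤ k ∧ ∃ v a : ℕ → ℕ,
    (∀ i j, i ≤ k → j ≤ k → v i = v j → i = j) ∧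
    (∀ i j, i < k → j < k → a i = a j → i = j) ∧
    (∀ i, i < k → a i ∈ D.A ∧ D.ends (a i) = (v i, v (i + 1))) ∧
    P = (Finset.range k).image a

/-- Number `c_k(D)` of directed cycles of length `k`. -/
noncomputable def cycCount (D : MDigraph) (k : ℕ) : ℕ :=
  (D.A.powerset.filter (fun C => IsCycle D C k)).card

/-- Number `p_k(D)` of directed paths of length `k`. -/
noncomputable def pathCount (D : MDigraph) (k : ℕ) : ℕ :=
  (D.A.powerset.filter (fun P => IsPath D P k)).card

/-- The cycle polynomial `σ(D;x) = ∑_k c_k(D) x^k`. -/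
noncomputable def cyclePoly (D : MDigraph) : Polynomial ℝ :=
  ∑ k ∈ Finset.range (D.A.card + 1), (cycCount D k : ℝ) • Polynomial.X ^ k

/-- The path polynomial `π(D;x) = ∑_k p_k(D) x^k`. -/
noncomputable def pathPoly (D : MDigraph) : Polynomial ℝ :=
  ∑ k ∈ Finset.range (D.A.card + 1), (pathCount D k : ℝ) • Polynomial.X ^ k


/-- Out-degree of `v`: arcs with tail `v`, counted with multiplicity. -/
noncomputable def outDeg (D : MDigraph) (v : ℕ) : ℕ :=
  (D.A.filter (fun a => (D.ends a).1 = v)).card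

/-- In-degree of `v`: arcs with head `v`, counted with multiplicity. -/
noncomputable def inDeg (D : MDigraph) (v : ℕ) : ℕ :=
  (D.A.filter (fun a => (D.ends a).2 = v)).card

/-- `P` is a directed path of length `k` in `D` beginning at `v0`. -/
def IsPathFrom (D : MDigraph) (v0 : ℕ) (P : Finset ℕ) (k : ℕ) : Prop :=
  1 ≤ k ∧ ∃ v a : ℕ → ℕ, v 0 = v0 ∧
    (∀ i j, i ≤ k → j ≤ k → v i = v j → i = j) ∧
    (∀ i j, i < k → j < k → a i = a j → i = j) ∧
    (∀ i, i < k → a i ∈ D.A ∧ D.ends (a i) = (v i, v (i + 1))) ∧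
    P = (Finset.range k).image a

/-- `P` is a directed path of length `k` in `D` ending at `v0`. -/
def IsPathTo (D : MDigraph) (v0 : ℕ) (P : Finset ℕ) (k : ℕ) : Prop :=
  1 ≤ k ∧ ∃ v a : ℕ → ℕ, v k = v0 ∧
    (∀ i j, i ≤ k → j ≤ k → v i = v j → i = j) ∧
    (∀ i j, i < k → j < k → a i = a j → i = j) ∧
    (∀ i, i < k → a i ∈ D.A ∧ D.ends (a i) = (v i, v (i + 1))) ∧
    P = (Finset.range k).image a

/-- `p_k(D,v,+)`: number of directed paths of length `k` beginning at `v`. -/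
noncomputable def pathFromCount (D : MDigraph) (v : ℕ) (k : ℕ) : ℕ :=
  (D.A.powerset.filter (fun P => IsPathFrom D v P k)).card

/-- `p_k(D,v,−)`: number of directed paths of length `k` ending at `v`. -/
noncomputable def pathToCount (D : MDigraph) (v : ℕ) (k : ℕ) : ℕ :=
  (D.A.powerset.filter (fun P => IsPathTo D v P k)).card

/-- `π_{v+}(D;x) = ∑_k p_k(D,v,+) x^k`. -/
noncomputable def pathFromPoly (D : MDigraph) (v : ℕ) : Polynomial ℝ :=
  ∑ k ∈ Finset.range (D.A.card + 1), (pathFromCount D v k : ℝ) • Polynomial.X ^ k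

/-- `π_{v-}(D;x) = ∑_k p_k(D,v,−) x^k`. -/
noncomputable def pathToPoly (D : MDigraph) (v : ℕ) : Polynomial ℝ :=
  ∑ k ∈ Finset.range (D.A.card + 1), (pathToCount D v k : ℝ) • Polynomial.X ^ k

/-- In the spanning subgraph `D⟨F⟩`, every vertex has out-degree ≤ 1 and
in-degree ≤ 1; equivalently, every component of `D⟨F⟩` is a directed cycle,
a directed path, or an isolated vertex. -/
def DegOK (D : MDigraph) (F : Finset ℕ) : Prop :=
  ∀ w : ℕ, (F.filter (fun a => (D.ends a).1 = w)).card ≤ 1 ∧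
    (F.filter (fun a => (D.ends a).2 = w)).card ≤ 1

/-- `kc(D⟨F⟩)`: the number of components of the spanning subgraph `D⟨F⟩` that are
directed cycles (for degree-constrained `F`, these are exactly the directed
cycles contained in `F`). -/
noncomputable def kcF (D : MDigraph) (F : Finset ℕ) : ℕ :=
  (F.powerset.filter (fun C => ∃ k, IsCycle D C k)).card

/-- `kp(D⟨F⟩)`: the number of components of the spanning subgraph `D⟨F⟩` that are
directed paths with at least one arc (for degree-constrained `F`, counted by
their initial vertices: vertices that are the tail of an arc of `F` but the
head of no arc of `F`). -/
noncomputable def kpF (D : MDigraph) (F : Finset ℕ) : ℕ :=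
  ((F.image (fun a => (D.ends a).1)).filter
    (fun w => (F.filter (fun a => (D.ends a).2 = w)).card = 0)).card

/-- The number of vertices covered by (incident to) the arcs of `F`. -/
noncomputable def coveredCard (D : MDigraph) (F : Finset ℕ) : ℕ :=
  ((F.image (fun a => (D.ends a).1)) ∪ (F.image (fun a => (D.ends a).2))).card

/-- `k(D⟨F⟩)`: total number of connected components of the spanning subgraph
`D⟨F⟩` (isolated vertices included), for degree-constrained `F` in a
well-formed digraph. -/
noncomputable def kF (D : MDigraph) (F : Finset ℕ) : ℕ :=
  D.V.card - coveredCard D F + kcF D F + kpF D F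

/-- `c(D⟨F⟩)`: number of covered components (components with at least one arc). -/
noncomputable def cF (D : MDigraph) (F : Finset ℕ) : ℕ := kcF D F + kpF D F

/-- `c₁(D⟨F⟩)`: number of loops in `F`. -/
noncomputable def loopCount (D : MDigraph) (F : Finset ℕ) : ℕ :=
  (F.filter (fun a => (D.ends a).1 = (D.ends a).2)).card

/-- The bivariate cycle polynomial
`σ̂(D;x,y) = ∑_F x^{|F|} y^{kc(D⟨F⟩)}`, the sum being over all arc subsets `F`
such that every component of `D⟨F⟩` is a directed cycle or an isolated vertex. -/
noncomputable def biCycPoly (D : MDigraph) : MvPolynomial (Fin 2) ℝ :=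
  ∑ F ∈ D.A.powerset.filter (fun F => DegOK D F ∧ kpF D F = 0),
    MvPolynomial.X 0 ^ F.card * MvPolynomial.X 1 ^ kcF D F

/-- The bivariate path polynomial
`π̂(D;x,y) = ∑_F x^{|F|} y^{kp(D⟨F⟩)}`, the sum being over all arc subsets `F`
such that every component of `D⟨F⟩` is a directed path or an isolated vertex. -/
noncomputable def biPathPoly (D : MDigraph) : MvPolynomial (Fin 2) ℝ :=
  ∑ F ∈ D.A.powerset.filter (fun F => DegOK D F ∧ kcF D F = 0),
    MvPolynomial.X 0 ^ F.card * MvPolynomial.X 1 ^ kpF D F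

/-- The trivariate cycle-path polynomial
`σ̂π(D;x,y,z) = ∑_F x^{|F|} y^{kc(D⟨F⟩)} z^{kp(D⟨F⟩)}`, the sum being over all
arc subsets `F` in which every vertex has in- and out-degree at most 1. -/
noncomputable def triPoly (D : MDigraph) : MvPolynomial (Fin 3) ℝ :=
  ∑ F ∈ D.A.powerset.filter (fun F => DegOK D F),
    MvPolynomial.X 0 ^ F.card * MvPolynomial.X 1 ^ kcF D F * MvPolynomial.X 2 ^ kpF D F

/-- The geometric cover polynomial `C̃(D;x,y) = ∑_{i,j} c_{i,j}(D) x^i y^j`,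
where `c_{i,j}(D)` is the number of ways of disjointly covering all vertices of
`D` with `i` directed paths and `j` directed cycles (isolated vertices counting
as paths of length 0): a cover is an arc subset `F` with all in- and out-degrees
at most 1, contributing `j = kc(D⟨F⟩)` cycles and
`i = kp(D⟨F⟩) + (number of uncovered vertices)` paths. -/
noncomputable def geomCover (D : MDigraph) (x y : ℝ) : ℝ :=
  ∑ F ∈ D.A.powerset.filter (fun F => DegOK D F),
    x ^ (kpF D F + (D.V.card - coveredCard D F)) * y ^ kcF D F

/-- No vertex is incident both to an arc of `A` and to an arc of `B`. -/
def NoCommonVertex (D : MDigraph) (A B : Finset ℕ) : Prop :=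
  ∀ a ∈ A, ∀ b ∈ B,
    (D.ends a).1 ≠ (D.ends b).1 ∧ (D.ends a).1 ≠ (D.ends b).2 ∧
    (D.ends a).2 ≠ (D.ends b).1 ∧ (D.ends a).2 ≠ (D.ends b).2

/-- The explicit polynomial
`N(D;x,y,z) = ∑_{(A,B)} x^{k(D⟨A∪B⟩)−c(D⟨B⟩)−c₁(D⟨A⟩)} y^{|A|+|B|−c(D⟨B⟩)} z^{c(D⟨B⟩)}`,
summing over pairs of disjoint arc subsets `A, B` sharing no vertex such that
every component of `D⟨A∪B⟩` is a directed cycle, a directed path or an isolated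
vertex. -/
noncomputable def NPoly (D : MDigraph) : MvPolynomial (Fin 3) ℝ :=
  ∑ p ∈ (D.A.powerset ×ˢ D.A.powerset).filter
      (fun p => Disjoint p.1 p.2 ∧ NoCommonVertex D p.1 p.2 ∧ DegOK D (p.1 ∪ p.2)),
    MvPolynomial.X 0 ^ (kF D (p.1 ∪ p.2) - cF D p.2 - loopCount D p.1) *
      MvPolynomial.X 1 ^ (p.1.card + p.2.card - cF D p.2) *
      MvPolynomial.X 2 ^ cF D p.2

end MDigraph

/-- A finite undirected graph: a finite vertex set and a finite set of
unordered pairs as edges. -/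
structure SGraph where
  V : Finset ℕ
  E : Finset (Sym2 ℕ)

namespace SGraph

/-- `G` is a simple graph: no loops, and all edge endpoints are vertices. -/
def Simple (G : SGraph) : Prop :=
  (∀ s ∈ G.E, ¬ s.IsDiag) ∧ ∀ s ∈ G.E, ∀ a ∈ s, a ∈ G.V

/-- `P` is (the edge set of) an undirected path of length `k` in `G`. -/
def IsUPath (G : SGraph) (P : Finset (Sym2 ℕ)) (k : ℕ) : Prop :=
  1 ≤ k ∧ ∃ v : ℕ → ℕ,
    (∀ i j, i ≤ k → j ≤ k → v i = v j → i = j) ∧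
    (∀ i, i < k → s(v i, v (i + 1)) ∈ G.E) ∧
    P = (Finset.range k).image (fun i => s(v i, v (i + 1)))

/-- `C` is (the edge set of) an undirected cycle of length `k ≥ 3` in `G`. -/
def IsUCycle (G : SGraph) (C : Finset (Sym2 ℕ)) (k : ℕ) : Prop :=
  3 ≤ k ∧ ∃ v : ℕ → ℕ,
    (∀ i j, i < k → j < k → v i = v j → i = j) ∧
    (∀ i, i < k → s(v i, v ((i + 1) % k)) ∈ G.E) ∧
    C = (Finset.range k).image (fun i => s(v i, v ((i + 1) % k)))

/-- `p_k(G)`: number of undirected paths of length `k` in `G`. -/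
noncomputable def uPathCount (G : SGraph) (k : ℕ) : ℕ :=
  (G.E.powerset.filter (fun P => IsUPath G P k)).card

/-- `c_k(G)`: number of undirected cycles of length `k` in `G`. -/
noncomputable def uCycCount (G : SGraph) (k : ℕ) : ℕ :=
  (G.E.powerset.filter (fun C => IsUCycle G C k)).card

/-- `π(G;x) = ∑_k p_k(G) x^k`. -/
noncomputable def uPathPoly (G : SGraph) : Polynomial ℝ :=
  ∑ k ∈ Finset.range (G.E.card + 1), (uPathCount G k : ℝ) • Polynomial.X ^ k

/-- `σ(G;x) = ∑_k c_k(G) x^k`. -/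
noncomputable def uCycPoly (G : SGraph) : Polynomial ℝ :=
  ∑ k ∈ Finset.range (G.E.card + 1), (uCycCount G k : ℝ) • Polynomial.X ^ k

/-- The digraph `D(G)` obtained from `G` by replacing each edge `{u,v}` by the
two oppositely oriented arcs `(u,v)` and `(v,u)`. -/
noncomputable def toDigraph (G : SGraph) : MDigraph :=
  ⟨G.V, ((G.V ×ˢ G.V).filter (fun p => s(p.1, p.2) ∈ G.E)).image (fun p => Nat.pair p.1 p.2),
   Nat.unpair⟩

end SGraph

/-!
Write `σ(D;x)` as `∑ x ^ |C|` over the arc sets `C` of the directed cycles of `D`. The cycles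
avoiding `e` are those of `D_{-e}`, and the cycles of `D_{/e}` avoiding the merged vertex `u` are
those of `D_{†e}`. Finally `C ↦ C \ {e}` is a bijection from the cycles through `e = (u, v)` onto
the cycles of `D_{/e}` through `u`, lowering the length by one. This is where deleting the arcs
`(u, x)` and `(y, v)` matters: they would give cycles through the merged vertex that do not come
from cycles through `e`.
-/

namespace Nat

theorem injOn_add_mod (k t : ℕ) : Set.InjOn (fun i => (i + t) % k) (Set.Iio k) := by
  intro i hi j hj h
  have h' : i ≡ j [MOD k] := Nat.ModEq.add_right_cancel' t h
  rwa [Nat.ModEq, Nat.mod_eq_of_lt hi, Nat.mod_eq_of_lt hj] at h'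

theorem mod_injOn_Ioc (k : ℕ) : Set.InjOn (· % k) (Set.Ioc 0 k) := by
  rintro i ⟨hi0, hik⟩ j ⟨hj0, hjk⟩ h
  rcases hik.lt_or_eq with hik | rfl <;> rcases hjk.lt_or_eq with hjk | rfl <;>
    simp_all [Nat.mod_eq_of_lt]

end Nat

namespace Finset

theorem image_range_add_mod {k : ℕ} (hk : 0 < k) (t : ℕ) (f : ℕ → ℕ) :
    (range k).image (fun i => f ((i + t) % k)) = (range k).image f := by
  have hrot : (range k).image (fun i => (i + t) % k) = range k := by
    refine eq_of_subset_of_card_le (fun x hx => ?_) ?_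
    · obtain ⟨i, -, rfl⟩ := mem_image.1 hx
      exact mem_range.2 (Nat.mod_lt _ hk)
    · rw [card_image_of_injOn (by simpa using Nat.injOn_add_mod k t)]
  conv_rhs => rw [← hrot, image_image]
  rfl

theorem image_range_succ_erase {k : ℕ} {f : ℕ → ℕ} (hf : Set.InjOn f (Set.Iio (k + 1))) :
    ((range (k + 1)).image f).erase (f k) = (range k).image f := by
  rw [range_add_one, image_insert, erase_insert]
  simp only [mem_image, mem_range, not_exists, not_and]
  exact fun i hi hik => hi.ne (hf (by simp; omega) (by simp) hik)

end Finset

namespace MDigraph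

structure IsCycleSeq (D : MDigraph) (k : ℕ) (v a : ℕ → ℕ) : Prop where
  injOn_vertex : Set.InjOn v (Set.Iio k)
  injOn_arc : Set.InjOn a (Set.Iio k)
  arc : ∀ i < k, a i ∈ D.A ∧ D.ends (a i) = (v i, v ((i + 1) % k))

theorem isCycle_iff {D : MDigraph} {C : Finset ℕ} {k : ℕ} :
    IsCycle D C k ↔ 1 ≤ k ∧ ∃ v a, D.IsCycleSeq k v a ∧ C = (Finset.range k).image a := by
  constructor
  · rintro ⟨hk, v, a, hv, ha, harc, rfl⟩
    exact ⟨hk, v, a, ⟨fun i hi j hj h => hv i j hi hj h, fun i hi j hj h => ha i j hi hj h, harc⟩,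
      rfl⟩
  · rintro ⟨hk, v, a, ⟨hv, ha, harc⟩, rfl⟩
    exact ⟨hk, v, a, fun i j hi hj h => hv hi hj h, fun i j hi hj h => ha hi hj h, harc, rfl⟩

theorem IsCycleSeq.ends_last {D : MDigraph} {k : ℕ} {x a : ℕ → ℕ}
    (h : D.IsCycleSeq (k + 1) x a) :
    D.ends (a k) = (x k, x 0) := by
  rw [(h.arc k (lt_add_one k)).2, Nat.mod_self]

theorem IsCycleSeq.rotate {D : MDigraph} {k : ℕ} {v a : ℕ → ℕ} (h : D.IsCycleSeq k v a)
    (hk : 0 < k) (t : ℕ) :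
    D.IsCycleSeq k (fun i => v ((i + t) % k)) (fun i => a ((i + t) % k)) := by
  have hmaps : Set.MapsTo (fun i => (i + t) % k) (Set.Iio k) (Set.Iio k) :=
    fun i _ => Nat.mod_lt _ hk
  refine ⟨h.injOn_vertex.comp (Nat.injOn_add_mod k t) hmaps,
    h.injOn_arc.comp (Nat.injOn_add_mod k t) hmaps, fun i _ => ?_⟩
  refine ⟨(h.arc _ (Nat.mod_lt _ hk)).1, ?_⟩
  rw [(h.arc _ (Nat.mod_lt _ hk)).2, Nat.mod_add_mod, Nat.mod_add_mod, Nat.add_right_comm]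

theorem IsCycle.exists_isCycleSeq_apply_eq {D : MDigraph} {C : Finset ℕ} {k b m : ℕ}
    (h : IsCycle D C k) (hb : b ∈ C) (hm : m < k) :
    ∃ v a, D.IsCycleSeq k v a ∧ C = (Finset.range k).image a ∧ a m = b := by
  obtain ⟨hk, v, a, hseq, rfl⟩ := isCycle_iff.1 h
  obtain ⟨j, hj, rfl⟩ := Finset.mem_image.1 hb
  refine ⟨_, _, hseq.rotate hk (j + (k - m)), (Finset.image_range_add_mod hk _ a).symm, ?_⟩
  rw [Finset.mem_range] at hj
  rw [show m + (j + (k - m)) = j + k by omega, Nat.add_mod_right, Nat.mod_eq_of_lt hj]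

theorem IsCycle.card_eq {D : MDigraph} {C : Finset ℕ} {k : ℕ} (h : IsCycle D C k) :
    C.card = k := by
  obtain ⟨-, v, a, hseq, rfl⟩ := isCycle_iff.1 h
  rw [Finset.card_image_of_injOn (by simpa using hseq.injOn_arc), Finset.card_range]

theorem IsCycle.subset {D : MDigraph} {C : Finset ℕ} {k : ℕ} (h : IsCycle D C k) :
    C ⊆ D.A := by
  obtain ⟨-, v, a, hseq, rfl⟩ := isCycle_iff.1 h
  intro x hx
  obtain ⟨i, hi, rfl⟩ := Finset.mem_image.1 hx
  exact (hseq.arc i (Finset.mem_range.1 hi)).1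

theorem IsCycle.exists_tail_eq_head {D : MDigraph} {C : Finset ℕ} {k b : ℕ}
    (h : IsCycle D C k) (hb : b ∈ C) : ∃ c ∈ C, (D.ends c).1 = (D.ends b).2 := by
  obtain ⟨v, a, hseq, rfl, rfl⟩ := h.exists_isCycleSeq_apply_eq hb (m := 0) h.1
  have hk : 0 < k := h.1
  refine ⟨a ((0 + 1) % k), Finset.mem_image_of_mem _ (Finset.mem_range.2 (Nat.mod_lt _ hk)), ?_⟩
  rw [(hseq.arc _ (Nat.mod_lt _ hk)).2, (hseq.arc 0 hk).2]

theorem IsCycle.of_ends_eq {D D' : MDigraph} {C : Finset ℕ} {k : ℕ} (h : IsCycle D C k)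
    (hA : C ⊆ D'.A) (hends : ∀ a ∈ C, D'.ends a = D.ends a) : IsCycle D' C k := by
  obtain ⟨hk, v, a, hseq, rfl⟩ := isCycle_iff.1 h
  have hmem : ∀ i < k, a i ∈ (Finset.range k).image a :=
    fun i hi => Finset.mem_image_of_mem a (Finset.mem_range.2 hi)
  refine isCycle_iff.2 ⟨hk, v, a, ⟨hseq.injOn_vertex, hseq.injOn_arc, fun i hi => ?_⟩, rfl⟩
  exact ⟨hA (hmem i hi), (hends _ (hmem i hi)).trans (hseq.arc i hi).2⟩

noncomputable def cycles (D : MDigraph) : Finset (Finset ℕ) :=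
  D.A.powerset.filter (fun C => ∃ k, IsCycle D C k)

theorem mem_cycles {D : MDigraph} {C : Finset ℕ} : C ∈ D.cycles ↔ ∃ k, IsCycle D C k := by
  rw [cycles, Finset.mem_filter, Finset.mem_powerset]
  exact ⟨And.right, fun ⟨k, h⟩ => ⟨h.subset, k, h⟩⟩

theorem cyclePoly_eq_sum_cycles (D : MDigraph) :
    D.cyclePoly = ∑ C ∈ D.cycles, (Polynomial.X : Polynomial ℝ) ^ C.card := by
  have hmaps : ∀ C ∈ D.cycles, C.card ∈ Finset.range (D.A.card + 1) := fun C hC =>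
    Finset.mem_range_succ_iff.2 (Finset.card_le_card (mem_cycles.1 hC).choose_spec.subset)
  rw [cyclePoly, ← Finset.sum_fiberwise_of_maps_to hmaps]
  refine Finset.sum_congr rfl fun k _ => ?_
  have hfiber : D.cycles.filter (fun C => C.card = k) =
      D.A.powerset.filter (fun C => IsCycle D C k) := by
    ext C
    simp only [cycles, Finset.mem_filter]
    exact ⟨fun ⟨⟨hC, _, h⟩, hk⟩ => ⟨hC, hk ▸ h.card_eq ▸ h⟩,
      fun ⟨hC, h⟩ => ⟨⟨hC, k, h⟩, h.card_eq⟩⟩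
  rw [Finset.sum_congr rfl fun C hC => by rw [(Finset.mem_filter.1 hC).2], Finset.sum_const,
    hfiber, cycCount, Nat.cast_smul_eq_nsmul]

theorem cycles_eq_filter_subset {D D' : MDigraph} (hA : D'.A ⊆ D.A)
    (hends : ∀ a ∈ D'.A, D'.ends a = D.ends a) :
    D'.cycles = D.cycles.filter (· ⊆ D'.A) := by
  ext C
  rw [Finset.mem_filter, mem_cycles, mem_cycles]
  constructor
  · rintro ⟨k, h⟩
    exact ⟨⟨k, h.of_ends_eq (h.subset.trans hA) fun a ha => (hends a (h.subset ha)).symm⟩,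
      h.subset⟩
  · rintro ⟨⟨k, h⟩, hC⟩
    exact ⟨k, h.of_ends_eq hC fun a ha => hends a (hC ha)⟩

theorem cycles_delArc (D : MDigraph) (e : ℕ) :
    (D.delArc e).cycles = D.cycles.filter (e ∉ ·) := by
  rw [cycles_eq_filter_subset (D := D) (D' := D.delArc e) (Finset.erase_subset e D.A)
    fun _ _ => rfl]
  refine Finset.filter_congr fun C hC => ?_
  rw [delArc, Finset.subset_erase, and_iff_right ((mem_cycles.1 hC).choose_spec.subset)]

theorem cycles_delVertex (D : MDigraph) (w : ℕ) :
    (D.delVertex w).cycles = D.cycles.filter (fun C => ¬ ∃ a ∈ C, (D.ends a).1 = w) := by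
  rw [cycles_eq_filter_subset (D := D) (D' := D.delVertex w) (Finset.filter_subset _ D.A)
    fun _ _ => rfl]
  refine Finset.filter_congr fun C hC => ?_
  obtain ⟨k, h⟩ := mem_cycles.1 hC
  simp only [delVertex, not_exists, not_and]
  constructor
  · exact fun hsub a ha => (Finset.mem_filter.1 (hsub ha)).2.1
  · intro htail a ha
    obtain ⟨c, hc, hca⟩ := h.exists_tail_eq_head ha
    exact Finset.mem_filter.2 ⟨h.subset ha, htail a ha, hca ▸ htail c hc⟩

def mergeInto (u v x : ℕ) : ℕ := if x = v then u else x

theorem mergeInto_self (u v : ℕ) : mergeInto u v v = u := if_pos rfl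

theorem mergeInto_of_ne {u v x : ℕ} (h : x ≠ v) : mergeInto u v x = x := if_neg h

theorem mergeInto_eq_left_iff {u v x : ℕ} : mergeInto u v x = u ↔ x = u ∨ x = v := by
  unfold mergeInto
  split_ifs with h <;> simp [h]

theorem mergeInto_ne_right {u v : ℕ} (huv : u ≠ v) (x : ℕ) : mergeInto u v x ≠ v := by
  unfold mergeInto
  split_ifs with h <;> assumption

theorem injOn_mergeInto (u v : ℕ) : Set.InjOn (mergeInto u v) {x | x ≠ u} := by
  intro x hx y hy h
  unfold mergeInto at h
  split_ifs at h <;> simp_all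

section Contraction

variable {D : MDigraph} {e : ℕ}

theorem contractArc_A (hnl : ¬ D.IsLoop e) :
    (D.contractArc e).A =
      D.A.filter (fun a => (D.ends a).1 ≠ (D.ends e).1 ∧ (D.ends a).2 ≠ (D.ends e).2) := by
  simp only [contractArc]
  rw [if_neg (show (D.ends e).1 ≠ (D.ends e).2 from hnl)]

theorem contractArc_ends (hnl : ¬ D.IsLoop e) (a : ℕ) :
    (D.contractArc e).ends a = (mergeInto (D.ends e).1 (D.ends e).2 (D.ends a).1,
      mergeInto (D.ends e).1 (D.ends e).2 (D.ends a).2) := by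
  simp only [contractArc]
  rw [if_neg (show (D.ends e).1 ≠ (D.ends e).2 from hnl)]
  rfl

theorem cycles_extractArc (hnl : ¬ D.IsLoop e) :
    (D.extractArc e).cycles = (D.contractArc e).cycles.filter
      (fun C => ¬ ∃ a ∈ C, ((D.contractArc e).ends a).1 = (D.ends e).1) := by
  have hA : (D.extractArc e).A = ((D.contractArc e).delVertex (D.ends e).1).A := by
    ext a
    simp only [extractArc, delVertex, contractArc_A hnl, contractArc_ends hnl, Finset.mem_filter,
      Ne, mergeInto_eq_left_iff]
    tauto
  have hends : ∀ a ∈ (D.extractArc e).A,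
      (D.extractArc e).ends a = ((D.contractArc e).delVertex (D.ends e).1).ends a := by
    intro a ha
    simp only [extractArc, Finset.mem_filter] at ha
    simp only [extractArc, delVertex, contractArc_ends hnl, mergeInto_of_ne ha.2.2.1,
      mergeInto_of_ne ha.2.2.2.2]
  rw [← cycles_delVertex, cycles_eq_filter_subset hA.le hends, hA]
  exact Finset.filter_true_of_mem fun C hC => (mem_cycles.1 hC).choose_spec.subset

theorem IsCycleSeq.contractArc (hnl : ¬ D.IsLoop e) {k : ℕ} {x a : ℕ → ℕ}
    (h : D.IsCycleSeq (k + 1) x a) (hak : a k = e) :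
    0 < k ∧
      (D.contractArc e).IsCycleSeq k (fun i => mergeInto (D.ends e).1 (D.ends e).2 (x i)) a := by
  obtain ⟨hxk, hx0⟩ : (D.ends e).1 = x k ∧ (D.ends e).2 = x 0 :=
    Prod.ext_iff.1 (hak ▸ h.ends_last)
  have hx_ne_tail : ∀ i < k, x i ≠ (D.ends e).1 := fun i hi hxi =>
    hi.ne (h.injOn_vertex (by simp; omega) (by simp) (hxi.trans hxk))
  have hx_ne_head : ∀ i, 0 < i → i < k + 1 → x i ≠ (D.ends e).2 := fun i hi0 hi hxi =>
    hi0.ne' (h.injOn_vertex (by simpa using hi) (by simp) (hxi.trans hx0))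
  have hk : 0 < k := Nat.pos_of_ne_zero fun hk0 => hnl (by subst hk0; exact hxk.trans hx0.symm)
  refine ⟨hk, (injOn_mergeInto _ _).comp (h.injOn_vertex.mono fun i hi => by simp_all; omega)
      (fun i hi => hx_ne_tail i hi), h.injOn_arc.mono fun i hi => by simp_all; omega,
    fun i hi => ?_⟩
  obtain ⟨haD, hends⟩ := h.arc i (by omega)
  rw [Nat.mod_eq_of_lt (show i + 1 < k + 1 by omega)] at hends
  refine ⟨?_, ?_⟩
  · rw [contractArc_A hnl, Finset.mem_filter, hends]
    exact ⟨haD, hx_ne_tail i hi, hx_ne_head (i + 1) (by omega) (by omega)⟩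
  · rw [contractArc_ends hnl, hends]
    dsimp only
    rcases (show i + 1 < k ∨ i + 1 = k by omega) with hik | hik
    · rw [Nat.mod_eq_of_lt hik]
    · rw [hik, Nat.mod_self, ← hxk, ← hx0, mergeInto_self, mergeInto_of_ne hnl]

theorem IsCycleSeq.of_contractArc (hnl : ¬ D.IsLoop e) (he : e ∈ D.A) {k : ℕ} {w b : ℕ → ℕ}
    (h : (D.contractArc e).IsCycleSeq k w b) (hk : 0 < k) (hw0 : w 0 = (D.ends e).1) :
    D.IsCycleSeq (k + 1) (fun i => if i = 0 then (D.ends e).2 else w (i % k))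
      (fun i => if i = k then e else b i) := by
  -- `i % k` sends `k` to `0`, so the lifted cycle reaches `w 0 = u` just before taking `e`.
  have hb : ∀ i < k, b i ∈ D.A ∧ (D.ends (b i)).1 ≠ (D.ends e).1 ∧
      (D.ends (b i)).2 ≠ (D.ends e).2 := fun i hi => by
    simpa only [contractArc_A hnl, Finset.mem_filter] using (h.arc i hi).1
  have hends : ∀ i < k, mergeInto (D.ends e).1 (D.ends e).2 (D.ends (b i)).1 = w i ∧
      mergeInto (D.ends e).1 (D.ends e).2 (D.ends (b i)).2 = w ((i + 1) % k) := fun i hi => by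
    have hends := (h.arc i hi).2
    rwa [contractArc_ends hnl, Prod.ext_iff] at hends
  have hw_ne_head : ∀ i < k, w i ≠ (D.ends e).2 := fun i hi =>
    (hends i hi).1 ▸ mergeInto_ne_right hnl _
  have hhead : ∀ i < k, (D.ends (b i)).2 = w ((i + 1) % k) := fun i hi => by
    rw [← (hends i hi).2, mergeInto_of_ne (hb i hi).2.2]
  have htail : ∀ i < k, (D.ends (b i)).1 = if i = 0 then (D.ends e).2 else w (i % k) := by
    intro i hi
    have hmerge := (hends i hi).1
    split_ifs with hi0
    · subst hi0
      exact ((mergeInto_eq_left_iff.1 (hmerge.trans hw0)).resolve_left (hb 0 hk).2.1)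
    · have hwi : w i ≠ (D.ends e).1 := fun hwi =>
        hi0 (h.injOn_vertex hi hk (hwi.trans hw0.symm))
      rw [Nat.mod_eq_of_lt hi, ← hmerge, mergeInto_of_ne]
      intro htl
      rw [htl, mergeInto_self] at hmerge
      exact hwi hmerge.symm
  refine ⟨?_, ?_, fun i hi => ?_⟩
  · intro i hi j hj hij
    simp only at hij
    split_ifs at hij with hi0 hj0 hj0
    · rw [hi0, hj0]
    · exact absurd hij.symm (hw_ne_head _ (Nat.mod_lt _ hk))
    · exact absurd hij (hw_ne_head _ (Nat.mod_lt _ hk))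
    · exact Nat.mod_injOn_Ioc k ⟨Nat.pos_of_ne_zero hi0, Nat.lt_succ_iff.1 hi⟩
        ⟨Nat.pos_of_ne_zero hj0, Nat.lt_succ_iff.1 hj⟩
        (h.injOn_vertex (Nat.mod_lt _ hk) (Nat.mod_lt _ hk) hij)
  · have he_ne : ∀ j < k, b j ≠ e := fun j hj hbj => (hb j hj).2.1 (by rw [hbj])
    intro i hi j hj hij
    simp only at hij
    split_ifs at hij with hik hjk hjk
    · rw [hik, hjk]
    · exact absurd hij.symm (he_ne j (by simp at hj; omega))
    · exact absurd hij (he_ne i (by simp at hi; omega))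
    · exact h.injOn_arc (by simp at hi ⊢; omega) (by simp at hj ⊢; omega) hij
  · by_cases hik : i = k
    · subst hik
      simpa only [if_true, Nat.mod_self, if_neg hk.ne', hw0, and_true] using he
    · have hik' : i < k := by omega
      simpa only [if_neg hik, Nat.mod_eq_of_lt (show i + 1 < k + 1 by omega),
        if_neg (Nat.succ_ne_zero i), ← hhead i hik', ← htail i hik', and_true]
        using (hb i hik').1

theorem IsCycle.erase_contractArc (hnl : ¬ D.IsLoop e) {C : Finset ℕ} {k : ℕ}
    (h : IsCycle D C (k + 1)) (heC : e ∈ C) :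
    IsCycle (D.contractArc e) (C.erase e) k ∧
      ∃ a ∈ C.erase e, ((D.contractArc e).ends a).1 = (D.ends e).1 := by
  obtain ⟨x, a, hseq, hC, hak⟩ := h.exists_isCycleSeq_apply_eq heC (lt_add_one k)
  obtain ⟨hk, hseq'⟩ := hseq.contractArc hnl hak
  have hx0 : x 0 = (D.ends e).2 := by rw [← hak, hseq.ends_last]
  rw [hC, ← hak, Finset.image_range_succ_erase hseq.injOn_arc, hak]
  refine ⟨isCycle_iff.2 ⟨hk, _, a, hseq', rfl⟩, a 0,
    Finset.mem_image_of_mem a (Finset.mem_range.2 hk), ?_⟩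
  rw [(hseq'.arc 0 hk).2, hx0, mergeInto_self]

theorem IsCycle.insert_of_contractArc (hnl : ¬ D.IsLoop e) (he : e ∈ D.A) {C : Finset ℕ}
    {k : ℕ} (h : IsCycle (D.contractArc e) C k)
    (hC : ∃ a ∈ C, ((D.contractArc e).ends a).1 = (D.ends e).1) :
    IsCycle D (insert e C) (k + 1) := by
  obtain ⟨c, hc, hcu⟩ := hC
  have hk : 0 < k := h.1
  obtain ⟨w, b, hseq, rfl, rfl⟩ := h.exists_isCycleSeq_apply_eq hc hk
  have hw0 : w 0 = (D.ends e).1 := by rw [← hcu, (hseq.arc 0 hk).2]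
  refine isCycle_iff.2 ⟨by omega, _, _, hseq.of_contractArc hnl he hk hw0, ?_⟩
  rw [Finset.range_add_one, Finset.image_insert, if_pos rfl]
  congr 1
  exact Finset.image_congr fun i hi => (if_neg (Finset.mem_range.1 hi).ne).symm

theorem sum_cycles_mem_eq_X_mul (hnl : ¬ D.IsLoop e) (he : e ∈ D.A) :
    ∑ C ∈ D.cycles.filter (e ∈ ·), (Polynomial.X : Polynomial ℝ) ^ C.card =
      Polynomial.X * ∑ C ∈ (D.contractArc e).cycles.filter
        (fun C => ∃ a ∈ C, ((D.contractArc e).ends a).1 = (D.ends e).1),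
        (Polynomial.X : Polynomial ℝ) ^ C.card := by
  have he_notMem : ∀ C ∈ (D.contractArc e).cycles, e ∉ C := fun C hC heC => by
    obtain ⟨k, h⟩ := mem_cycles.1 hC
    have := h.subset heC
    simp [contractArc_A hnl] at this
  rw [Finset.mul_sum]
  refine Finset.sum_nbij' (fun C => C.erase e) (insert e) ?_ ?_ ?_ ?_ ?_
  · intro C hC
    obtain ⟨hC, heC⟩ := Finset.mem_filter.1 hC
    obtain ⟨k, h⟩ := mem_cycles.1 hC
    obtain ⟨k, rfl⟩ : ∃ k', k = k' + 1 := Nat.exists_eq_add_one.2 h.1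
    obtain ⟨h', hu⟩ := h.erase_contractArc hnl heC
    exact Finset.mem_filter.2 ⟨mem_cycles.2 ⟨k, h'⟩, hu⟩
  · intro C hC
    obtain ⟨hC, hu⟩ := Finset.mem_filter.1 hC
    obtain ⟨k, h⟩ := mem_cycles.1 hC
    exact Finset.mem_filter.2
      ⟨mem_cycles.2 ⟨k + 1, h.insert_of_contractArc hnl he hu⟩, Finset.mem_insert_self e C⟩
  · exact fun C hC => Finset.insert_erase (Finset.mem_filter.1 hC).2
  · exact fun C hC => Finset.erase_insert (he_notMem C (Finset.mem_filter.1 hC).1)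
  · intro C hC
    rw [← pow_succ', Finset.card_erase_add_one (Finset.mem_filter.1 hC).2]

end Contraction

end MDigraph

theorem cyclePoly_deletion_contraction_extraction_general (D : MDigraph)
    (e : ℕ) (he : e ∈ D.A) (hnl : ¬ D.IsLoop e) :
    D.cyclePoly = (D.delArc e).cyclePoly + Polynomial.X * (D.contractArc e).cyclePoly
      - Polynomial.X * (D.extractArc e).cyclePoly := by
  simp only [MDigraph.cyclePoly_eq_sum_cycles, MDigraph.cycles_delArc,
    MDigraph.cycles_extractArc hnl]
  rw [← Finset.sum_filter_add_sum_filter_not D.cycles (e ∈ ·),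
    ← Finset.sum_filter_add_sum_filter_not (D.contractArc e).cycles
      (fun C => ∃ a ∈ C, ((D.contractArc e).ends a).1 = (D.ends e).1),
    MDigraph.sum_cycles_mem_eq_X_mul hnl he]
  ring

/-- for a non-loop arc `e = (u,v)` of `D` with no loop at `u` and
no loop at `v`, `σ(D;x) = σ(D_{-e};x) + x·σ(D_{/e};x) − x·σ(D_{†e};x)`. -/
theorem cyclePoly_deletion_contraction_extraction (D : MDigraph) (hwf : D.WellFormed)
    (e : ℕ) (he : e ∈ D.A) (hnl : ¬ D.IsLoop e)
    (hu : ∀ a ∈ D.A, D.ends a ≠ ((D.ends e).1, (D.ends e).1))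
    (hv : ∀ a ∈ D.A, D.ends a ≠ ((D.ends e).2, (D.ends e).2)) :
    D.cyclePoly = (D.delArc e).cyclePoly + Polynomial.X * (D.contractArc e).cyclePoly
      - Polynomial.X * (D.extractArc e).cyclePoly :=
  cyclePoly_deletion_contraction_extraction_general D e he hnl
end

section
/- Let D be a finite multidigraph and let e=(u,v) be a non-loop arc of D. Then π(D;x) = π(D_{-e};x) + x·π(D_{/e};x) − x·π(D_{†e};x) + x. -/
open Classical

/-! Compare coefficients. A path of length `k + 1` either avoids `e = (u, v)`, and is then a
path of `D_{-e}`, or passes through `e`. Erasing `e` from such a path and merging `v` into `u`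
gives a path of length `k` of `D_{/e}` through `u`, and every such path arises exactly once:
the arc leaving `u` in `D_{/e}` left `v` in `D`, so `e` can be put back in front of it. The
remaining paths of `D_{/e}`, those avoiding `u`, are exactly the paths of `D_{†e}`. Hence
`p_{k+1}(D) = p_{k+1}(D_{-e}) + p_k(D_{/e}) - p_k(D_{†e})` for `k ≥ 1`, while in length one
the single path `{e}` accounts for the term `x`. -/

open Finset

section IndexSurgery

variable {α : Type*}

def skipIdx (j i : ℕ) : ℕ := if i < j then i else i + 1

def insertIdx (j : ℕ) (x : α) (f : ℕ → α) (i : ℕ) : α :=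
  if i < j then f i else if i = j then x else f (i - 1)

lemma skipIdx_strictMono (j : ℕ) : StrictMono (skipIdx j) := by
  intro a b h
  unfold skipIdx
  split_ifs <;> omega

lemma skipIdx_ne (j i : ℕ) : skipIdx j i ≠ j := by
  unfold skipIdx
  split_ifs <;> omega

lemma skipIdx_lt {j i n : ℕ} (h : i < n) : skipIdx j i < n + 1 := by
  unfold skipIdx
  split_ifs <;> omega

lemma Set.InjOn.comp_skipIdx {f : ℕ → α} {n : ℕ} (hf : Set.InjOn f (Set.Iio (n + 1)))
    (j : ℕ) : Set.InjOn (f ∘ skipIdx j) (Set.Iio n) :=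
  hf.comp (skipIdx_strictMono j).injective.injOn fun _ hi => skipIdx_lt hi

lemma image_comp_skipIdx [DecidableEq α] {f : ℕ → α} {n j : ℕ}
    (hf : Set.InjOn f (Set.Iio (n + 1))) (hj : j < n + 1) :
    (range n).image (f ∘ skipIdx j) = ((range (n + 1)).image f).erase (f j) := by
  ext x
  simp only [mem_image, mem_range, mem_erase, Function.comp_apply]
  constructor
  · rintro ⟨i, hi, rfl⟩
    exact ⟨fun h => skipIdx_ne j i (hf (skipIdx_lt hi) hj h), _, skipIdx_lt hi, rfl⟩
  · rintro ⟨hx, i, hi, rfl⟩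
    have hij : i ≠ j := fun h => hx (h ▸ rfl)
    refine ⟨if i < j then i else i - 1, by split_ifs <;> omega, ?_⟩
    unfold skipIdx
    split_ifs <;> first | rfl | (congr 1; omega)

lemma insertIdx_of_lt {j i : ℕ} (x : α) (f : ℕ → α) (h : i < j) : insertIdx j x f i = f i :=
  if_pos h

@[simp] lemma insertIdx_self (j : ℕ) (x : α) (f : ℕ → α) : insertIdx j x f j = x := by
  simp [insertIdx]

lemma insertIdx_of_gt {j i : ℕ} (x : α) (f : ℕ → α) (h : j < i) :
    insertIdx j x f i = f (i - 1) := by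
  simp [insertIdx, show ¬ i < j by omega, show i ≠ j by omega]

lemma injOn_insertIdx {f : ℕ → α} {n j : ℕ} {x : α} (hf : Set.InjOn f (Set.Iio n))
    (hx : ∀ i < n, f i ≠ x) (hj : j ≤ n) : Set.InjOn (insertIdx j x f) (Set.Iio (n + 1)) := by
  intro i₁ h₁ i₂ h₂ h
  simp only [Set.mem_Iio] at h₁ h₂
  unfold insertIdx at h
  split_ifs at h <;>
    first
      | omega
      | (have := hf (show _ < n by omega) (show _ < n by omega) h; omega)
      | exact absurd h (hx _ (by omega))
      | exact absurd h.symm (hx _ (by omega))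

lemma image_insertIdx [DecidableEq α] (f : ℕ → α) {n j : ℕ} (x : α) (hj : j ≤ n) :
    (range (n + 1)).image (insertIdx j x f) = insert x ((range n).image f) := by
  ext y
  simp only [mem_image, mem_range, mem_insert]
  constructor
  · rintro ⟨i, hi, rfl⟩
    unfold insertIdx
    split_ifs
    · exact Or.inr ⟨i, by omega, rfl⟩
    · exact Or.inl rfl
    · exact Or.inr ⟨i - 1, by omega, rfl⟩
  · rintro (rfl | ⟨i, hi, rfl⟩)
    · exact ⟨j, by omega, insertIdx_self j _ f⟩
    · by_cases hij : i < j
      · exact ⟨i, by omega, insertIdx_of_lt _ f hij⟩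
      · exact ⟨i + 1, by omega, insertIdx_of_gt _ f (by omega)⟩

end IndexSurgery

namespace MDigraph

variable (D : MDigraph)

structure IsPathSeq (k : ℕ) (v a : ℕ → ℕ) : Prop where
  injOn_vertex : Set.InjOn v (Set.Iio (k + 1))
  injOn_arc : Set.InjOn a (Set.Iio k)
  mem : ∀ i < k, a i ∈ D.A
  ends_eq : ∀ i < k, D.ends (a i) = (v i, v (i + 1))

variable {D} {e : ℕ}

lemma isPath_iff {P : Finset ℕ} {k : ℕ} :
    D.IsPath P k ↔ 1 ≤ k ∧ ∃ v a, D.IsPathSeq k v a ∧ P = (range k).image a := by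
  constructor
  · rintro ⟨hk, v, a, hv, ha, harc, rfl⟩
    exact ⟨hk, v, a, ⟨fun i hi j hj => hv i j (Nat.lt_succ_iff.1 hi) (Nat.lt_succ_iff.1 hj),
      fun i hi j hj => ha i j hi hj, fun i hi => (harc i hi).1, fun i hi => (harc i hi).2⟩, rfl⟩
  · rintro ⟨hk, v, a, hp, rfl⟩
    exact ⟨hk, v, a, fun i j hi hj => hp.injOn_vertex (Nat.lt_succ_of_le hi) (Nat.lt_succ_of_le hj),
      fun i j hi hj => hp.injOn_arc hi hj, fun i hi => ⟨hp.mem i hi, hp.ends_eq i hi⟩, rfl⟩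

lemma IsPath.subset {P : Finset ℕ} {k : ℕ} (h : D.IsPath P k) : P ⊆ D.A := by
  obtain ⟨-, v, a, hp, rfl⟩ := isPath_iff.1 h
  intro b hb
  obtain ⟨i, hi, rfl⟩ := mem_image.1 hb
  exact hp.mem i (mem_range.1 hi)

lemma IsPath.card_eq {P : Finset ℕ} {k : ℕ} (h : D.IsPath P k) : P.card = k := by
  obtain ⟨-, v, a, hp, rfl⟩ := isPath_iff.1 h
  rw [card_image_of_injOn (fun i hi j hj => hp.injOn_arc (mem_range.1 hi) (mem_range.1 hj)),
    card_range]

lemma isPath_singleton (he : e ∈ D.A) (hnl : ¬ D.IsLoop e) : D.IsPath {e} 1 := by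
  refine isPath_iff.2 ⟨le_rfl, fun i => if i = 0 then (D.ends e).1 else (D.ends e).2,
    fun _ => e, ⟨?_, fun i hi j hj _ => by simp_all, fun _ _ => he, ?_⟩, by simp⟩
  · intro i hi j hj h
    simp only [Set.mem_Iio] at hi hj
    interval_cases i <;> interval_cases j <;> simp_all [IsLoop, eq_comm]
  · intro i hi
    obtain rfl : i = 0 := by omega
    simp

lemma IsPath.transfer {D' : MDigraph} {P : Finset ℕ} {k : ℕ} (h : D.IsPath P k)
    (hA : ∀ b ∈ P, b ∈ D.A → b ∈ D'.A) (hends : ∀ b ∈ P, D.ends b = D'.ends b) :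
    D'.IsPath P k := by
  obtain ⟨hk, v, a, hp, rfl⟩ := isPath_iff.1 h
  have ha : ∀ i < k, a i ∈ (range k).image a := fun i hi => mem_image_of_mem a (mem_range.2 hi)
  exact isPath_iff.2 ⟨hk, v, a, ⟨hp.injOn_vertex, hp.injOn_arc,
    fun i hi => hA _ (ha i hi) (hp.mem i hi), fun i hi => hends _ (ha i hi) ▸ hp.ends_eq i hi⟩, rfl⟩

lemma isPath_delArc_iff {P : Finset ℕ} {k : ℕ} :
    (D.delArc e).IsPath P k ↔ D.IsPath P k ∧ e ∉ P := by
  constructor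
  · intro h
    exact ⟨h.transfer (fun b _ hb => mem_of_mem_erase hb) (fun _ _ => rfl),
      fun heP => (mem_erase.1 (h.subset heP)).1 rfl⟩
  · rintro ⟨h, heP⟩
    exact h.transfer (fun b hb hbA => mem_erase.2 ⟨ne_of_mem_of_not_mem hb heP, hbA⟩)
      (fun _ _ => rfl)

def Touches (P : Finset ℕ) (x : ℕ) : Prop :=
  ∃ b ∈ P, (D.ends b).1 = x ∨ (D.ends b).2 = x

lemma IsPathSeq.touches_image_iff {k : ℕ} {v a : ℕ → ℕ} (hp : D.IsPathSeq k v a) (hk : 1 ≤ k)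
    (x : ℕ) : D.Touches ((range k).image a) x ↔ ∃ i < k + 1, v i = x := by
  constructor
  · rintro ⟨b, hb, h⟩
    obtain ⟨i, hi, rfl⟩ := mem_image.1 hb
    rw [mem_range] at hi
    rw [hp.ends_eq i hi] at h
    rcases h with h | h
    · exact ⟨i, by omega, h⟩
    · exact ⟨i + 1, by omega, h⟩
  · rintro ⟨i, hi, rfl⟩
    by_cases hik : i < k
    · exact ⟨a i, mem_image_of_mem a (mem_range.2 hik), Or.inl (by rw [hp.ends_eq i hik])⟩
    · refine ⟨a (k - 1), mem_image_of_mem a (mem_range.2 (by omega)), Or.inr ?_⟩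
      rw [hp.ends_eq _ (by omega), show k - 1 + 1 = i by omega]

section Contraction

variable {u w : ℕ}

lemma mem_contractArc_A (he : D.ends e = (u, w)) (huw : u ≠ w) {b : ℕ} :
    b ∈ (D.contractArc e).A ↔ b ∈ D.A ∧ (D.ends b).1 ≠ u ∧ (D.ends b).2 ≠ w := by
  simp [contractArc, he, huw]

lemma contractArc_ends_s3 (he : D.ends e = (u, w)) (huw : u ≠ w) (b : ℕ) :
    (D.contractArc e).ends b = (if (D.ends b).1 = w then u else (D.ends b).1,
      if (D.ends b).2 = w then u else (D.ends b).2) := by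
  simp [contractArc, he, huw]

lemma notMem_contractArc_A (he : D.ends e = (u, w)) (huw : u ≠ w) :
    e ∉ (D.contractArc e).A := by
  simp [mem_contractArc_A he huw, he]

lemma contractArc_ends_ne (he : D.ends e = (u, w)) (huw : u ≠ w) (b : ℕ) :
    ((D.contractArc e).ends b).1 ≠ w ∧ ((D.contractArc e).ends b).2 ≠ w := by
  rw [contractArc_ends_s3 he huw]
  constructor <;> dsimp only <;> split_ifs <;> assumption

lemma ends_of_mem_contractArc (he : D.ends e = (u, w)) (huw : u ≠ w) {b : ℕ}
    (hb : b ∈ (D.contractArc e).A) :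
    D.ends b = (if ((D.contractArc e).ends b).1 = u then w else ((D.contractArc e).ends b).1,
      ((D.contractArc e).ends b).2) := by
  rw [mem_contractArc_A he huw] at hb
  rw [contractArc_ends_s3 he huw]
  obtain ⟨-, h1, h2⟩ := hb
  ext <;> dsimp only <;> split_ifs <;> simp_all

lemma mem_extractArc_A (he : D.ends e = (u, w)) (huw : u ≠ w) {b : ℕ} :
    b ∈ (D.extractArc e).A ↔ b ∈ (D.contractArc e).A ∧
      ((D.contractArc e).ends b).1 ≠ u ∧ ((D.contractArc e).ends b).2 ≠ u := by
  simp only [extractArc, he, mem_filter, mem_contractArc_A he huw, contractArc_ends_s3 he huw]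
  split_ifs <;> simp_all

lemma contractArc_ends_of_mem_extractArc (he : D.ends e = (u, w)) (huw : u ≠ w) {b : ℕ}
    (hb : b ∈ (D.extractArc e).A) : (D.contractArc e).ends b = (D.extractArc e).ends b := by
  simp only [extractArc, he, mem_filter] at hb
  simp [contractArc_ends_s3 he huw, extractArc, hb]

lemma IsPathSeq.contractArc {k j : ℕ} {v a : ℕ → ℕ} (hp : D.IsPathSeq (k + 1) v a)
    (he : D.ends e = (u, w)) (huw : u ≠ w) (hj : j < k + 1) (haj : a j = e) :
    (D.contractArc e).IsPathSeq k (v ∘ skipIdx (j + 1)) (a ∘ skipIdx j) := by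
  obtain ⟨rfl, rfl⟩ : v j = u ∧ v (j + 1) = w := by
    simpa [haj, he, eq_comm] using hp.ends_eq j hj
  have hv : ∀ {s t}, s < k + 2 → t < k + 2 → (v s = v t ↔ s = t) :=
    fun hs ht => hp.injOn_vertex.eq_iff hs ht
  refine ⟨hp.injOn_vertex.comp_skipIdx _, hp.injOn_arc.comp_skipIdx _, fun i hi => ?_,
    fun i hi => ?_⟩
  · have hs := skipIdx_lt (j := j) hi
    rw [Function.comp_apply, mem_contractArc_A he huw, hp.ends_eq _ hs]
    refine ⟨hp.mem _ hs, ?_, ?_⟩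
    · rw [Ne, hv (by omega) (by omega)]
      exact skipIdx_ne j i
    · rw [Ne, hv (by omega) (by omega)]
      exact fun h => skipIdx_ne j i (by omega)
  · rw [Function.comp_apply, contractArc_ends_s3 he huw, hp.ends_eq _ (skipIdx_lt hi)]
    simp only [Function.comp_apply, skipIdx]
    rcases lt_trichotomy i j with h | rfl | h
    · simp [h, h.le, h.ne, show i ≠ j + 1 by omega,
        hv (show i < k + 2 by omega) (show j + 1 < k + 2 by omega),
        hv (show i + 1 < k + 2 by omega) (show j + 1 < k + 2 by omega)]
    · simp [hv (show i + 2 < k + 2 by omega) (show i + 1 < k + 2 by omega)]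
    · simp [show ¬ i < j by omega, show ¬ i ≤ j by omega, h.ne', show i + 1 ≠ j by omega,
        hv (show i + 1 < k + 2 by omega) (show j + 1 < k + 2 by omega),
        hv (show i + 1 + 1 < k + 2 by omega) (show j + 1 < k + 2 by omega)]

lemma IsPathSeq.insertArc {k j : ℕ} {v a : ℕ → ℕ} (hp : (D.contractArc e).IsPathSeq k v a)
    (hk : 1 ≤ k) (heA : e ∈ D.A) (he : D.ends e = (u, w)) (huw : u ≠ w) (hj : j < k + 1)
    (hvj : v j = u) : D.IsPathSeq (k + 1) (insertIdx (j + 1) w v) (insertIdx j e a) := by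
  have hvw : ∀ i < k + 1, v i ≠ w := by
    intro i hi
    obtain ⟨b, -, hb⟩ := (hp.touches_image_iff hk (v i)).2 ⟨i, hi, rfl⟩
    have := contractArc_ends_ne he huw b
    rcases hb with hb | hb
    exacts [hb ▸ this.1, hb ▸ this.2]
  have hae : ∀ i < k, a i ≠ e := fun i hi h => notMem_contractArc_A he huw (h ▸ hp.mem i hi)
  have hmem : ∀ i < k, a i ∈ D.A := fun i hi => ((mem_contractArc_A he huw).1 (hp.mem i hi)).1
  -- in `D`, the arc of the path leaving the merged vertex `u` leaves `w`
  have hends : ∀ i < k, D.ends (a i) = (if i = j then w else v i, v (i + 1)) := by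
    intro i hi
    rw [ends_of_mem_contractArc he huw (hp.mem i hi), hp.ends_eq i hi, ← hvj]
    simp only [hp.injOn_vertex.eq_iff (show i < k + 1 by omega) hj]
  refine ⟨injOn_insertIdx hp.injOn_vertex hvw (by omega), injOn_insertIdx hp.injOn_arc hae
    (by omega), fun i hi => ?_, fun i hi => ?_⟩
  · unfold insertIdx
    split_ifs
    exacts [hmem i (by omega), heA, hmem (i - 1) (by omega)]
  · rcases lt_trichotomy i j with h | rfl | h
    · rw [insertIdx_of_lt _ _ h, insertIdx_of_lt _ _ (show i < j + 1 by omega),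
        insertIdx_of_lt _ _ (show i + 1 < j + 1 by omega), hends i (by omega), if_neg h.ne]
    · rw [insertIdx_self, insertIdx_of_lt _ _ (Nat.lt_succ_self i), insertIdx_self, he, hvj]
    · rw [insertIdx_of_gt _ _ h, hends (i - 1) (by omega),
        insertIdx_of_gt _ _ (show j + 1 < i + 1 by omega), Nat.add_sub_cancel,
        Nat.sub_add_cancel (show 1 ≤ i by omega)]
      by_cases hi' : i = j + 1
      · subst hi'
        simp
      · rw [if_neg (by omega), insertIdx_of_gt _ _ (show j + 1 < i by omega)]

lemma IsPath.erase_contractArc {P : Finset ℕ} {k : ℕ} (hP : D.IsPath P (k + 1)) (heP : e ∈ P)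
    (hk : 1 ≤ k) (he : D.ends e = (u, w)) (huw : u ≠ w) :
    (D.contractArc e).IsPath (P.erase e) k ∧ (D.contractArc e).Touches (P.erase e) u := by
  obtain ⟨-, v, a, hp, rfl⟩ := isPath_iff.1 hP
  obtain ⟨j, hj, rfl⟩ : ∃ j < k + 1, a j = e := by simpa using heP
  have hq := hp.contractArc he huw hj rfl
  have hvj : v j = u := congrArg Prod.fst ((hp.ends_eq j hj).symm.trans he)
  rw [← image_comp_skipIdx hp.injOn_arc hj]
  exact ⟨isPath_iff.2 ⟨hk, _, _, hq, rfl⟩,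
    (hq.touches_image_iff hk u).2 ⟨j, hj, by simpa [skipIdx] using hvj⟩⟩

lemma IsPath.insert_of_contractArc {Q : Finset ℕ} {k : ℕ} (hQ : (D.contractArc e).IsPath Q k)
    (hu : (D.contractArc e).Touches Q u) (heA : e ∈ D.A) (he : D.ends e = (u, w))
    (huw : u ≠ w) : D.IsPath (insert e Q) (k + 1) := by
  obtain ⟨hk, v, a, hp, rfl⟩ := isPath_iff.1 hQ
  obtain ⟨j, hj, hvj⟩ := (hp.touches_image_iff hk u).1 hu
  rw [← image_insertIdx a e (show j ≤ k by omega)]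
  exact isPath_iff.2 ⟨by omega, _, _, hp.insertArc hk heA he huw hj hvj, rfl⟩

lemma isPath_extractArc_iff (he : D.ends e = (u, w)) (huw : u ≠ w) {P : Finset ℕ} {k : ℕ} :
    (D.extractArc e).IsPath P k ↔
      (D.contractArc e).IsPath P k ∧ ¬ (D.contractArc e).Touches P u := by
  constructor
  · intro h
    refine ⟨h.transfer (fun b _ hb => ((mem_extractArc_A he huw).1 hb).1)
      (fun b hb => (contractArc_ends_of_mem_extractArc he huw (h.subset hb)).symm), ?_⟩
    rintro ⟨b, hb, hbu⟩
    have := (mem_extractArc_A he huw).1 (h.subset hb)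
    tauto
  · rintro ⟨h, hu⟩
    have hP : ∀ b ∈ P, b ∈ (D.extractArc e).A := fun b hb =>
      (mem_extractArc_A he huw).2 ⟨h.subset hb, fun h' => hu ⟨b, hb, Or.inl h'⟩,
        fun h' => hu ⟨b, hb, Or.inr h'⟩⟩
    exact h.transfer (fun b hb _ => hP b hb)
      (fun b hb => contractArc_ends_of_mem_extractArc he huw (hP b hb))

end Contraction

variable (D)

noncomputable def paths (k : ℕ) : Finset (Finset ℕ) := D.A.powerset.filter (D.IsPath · k)

lemma mem_paths {P : Finset ℕ} {k : ℕ} : P ∈ D.paths k ↔ D.IsPath P k := by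
  simpa [paths] using fun h => h.subset

lemma pathCount_eq_card_paths (k : ℕ) : D.pathCount k = (D.paths k).card := rfl

lemma pathCount_zero : D.pathCount 0 = 0 := by
  rw [pathCount_eq_card_paths, card_eq_zero, eq_empty_iff_forall_notMem]
  exact fun P hP => absurd (isPath_iff.1 ((mem_paths D).1 hP)).1 (by omega)

lemma pathCount_eq_zero_of_card_lt {k : ℕ} (h : D.A.card < k) : D.pathCount k = 0 := by
  rw [pathCount_eq_card_paths, card_eq_zero, eq_empty_iff_forall_notMem]
  intro P hP
  rw [mem_paths] at hP
  have := card_le_card hP.subset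
  rw [hP.card_eq] at this
  omega

lemma coeff_pathPoly (n : ℕ) : D.pathPoly.coeff n = D.pathCount n := by
  rw [pathPoly, Polynomial.finsetSum_coeff]
  simp only [Polynomial.coeff_smul, Polynomial.coeff_X_pow, smul_eq_mul, mul_ite, mul_one,
    mul_zero, sum_ite_eq, mem_range]
  split_ifs with h
  · rfl
  · rw [pathCount_eq_zero_of_card_lt D (by omega), Nat.cast_zero]

lemma pathCount_eq_delArc_add (e k : ℕ) :
    D.pathCount k = (D.delArc e).pathCount k + ((D.paths k).filter (e ∈ ·)).card := by
  have hdel : (D.delArc e).paths k = (D.paths k).filter (e ∉ ·) := by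
    ext P
    simp [mem_paths, isPath_delArc_iff]
  rw [pathCount_eq_card_paths, pathCount_eq_card_paths, hdel, add_comm,
    card_filter_add_card_filter_not]

variable {D}

lemma card_paths_one_filter_mem (he : e ∈ D.A) (hnl : ¬ D.IsLoop e) :
    ((D.paths 1).filter (e ∈ ·)).card = 1 := by
  refine card_eq_one.2 ⟨{e}, ext fun P => ?_⟩
  simp only [mem_filter, mem_paths, mem_singleton]
  constructor
  · rintro ⟨hP, heP⟩
    obtain ⟨b, rfl⟩ := card_eq_one.1 hP.card_eq
    rw [mem_singleton.1 heP]
  · rintro rfl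
    exact ⟨isPath_singleton he hnl, mem_singleton_self e⟩

lemma pathCount_contractArc (he : e ∈ D.A) (hnl : ¬ D.IsLoop e) {k : ℕ} (hk : 1 ≤ k) :
    (D.contractArc e).pathCount k =
      ((D.paths (k + 1)).filter (e ∈ ·)).card + (D.extractArc e).pathCount k := by
  obtain ⟨u, w, hends⟩ : ∃ u w, D.ends e = (u, w) := ⟨_, _, rfl⟩
  have huw : u ≠ w := by simpa [IsLoop, hends] using hnl
  have hthrough : ((D.paths (k + 1)).filter (e ∈ ·)).card =
      ((D.contractArc e).paths k |>.filter ((D.contractArc e).Touches · u)).card := by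
    refine card_nbij' (·.erase e) (insert e ·) (fun P hP => ?_) (fun Q hQ => ?_)
      (fun P hP => insert_erase (mem_filter.1 hP).2) (fun Q hQ => ?_)
    · simp only [coe_filter, Set.mem_ofPred_eq, mem_paths] at hP ⊢
      exact hP.1.erase_contractArc hP.2 hk hends huw
    · simp only [coe_filter, Set.mem_ofPred_eq, mem_paths] at hQ ⊢
      exact ⟨hQ.1.insert_of_contractArc hQ.2 he hends huw, mem_insert_self e Q⟩
    · simp only [coe_filter, Set.mem_ofPred_eq, mem_paths] at hQ
      exact erase_insert fun heQ => notMem_contractArc_A hends huw (hQ.1.subset heQ)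
  have hext : (D.extractArc e).paths k =
      ((D.contractArc e).paths k).filter (¬ (D.contractArc e).Touches · u) := by
    ext P
    simp [mem_paths, isPath_extractArc_iff hends huw]
  rw [hthrough, pathCount_eq_card_paths, pathCount_eq_card_paths, hext,
    card_filter_add_card_filter_not]

end MDigraph

theorem pathPoly_deletion_contraction_extraction_general (D : MDigraph)
    (e : ℕ) (he : e ∈ D.A) (hnl : ¬ D.IsLoop e) :
    D.pathPoly = (D.delArc e).pathPoly + Polynomial.X * (D.contractArc e).pathPoly
      - Polynomial.X * (D.extractArc e).pathPoly + Polynomial.X := by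
  ext n
  rcases n with _ | _ | k
  · simp [MDigraph.coeff_pathPoly, MDigraph.pathCount_zero]
  · simp [MDigraph.coeff_pathPoly, MDigraph.pathCount_zero, D.pathCount_eq_delArc_add e 1,
      MDigraph.card_paths_one_filter_mem he hnl]
  · have hdel := D.pathCount_eq_delArc_add e (k + 1 + 1)
    have hcon := MDigraph.pathCount_contractArc he hnl (Nat.le_add_left 1 k)
    simp only [Polynomial.coeff_add, Polynomial.coeff_sub, Polynomial.coeff_X_mul,
      Polynomial.coeff_X_of_ne_one (show k + 1 + 1 ≠ 1 by omega), MDigraph.coeff_pathPoly, hdel,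
      hcon]
    push_cast
    ring

/-- for a non-loop arc `e = (u,v)` of `D`,
`π(D;x) = π(D_{-e};x) + x·π(D_{/e};x) − x·π(D_{†e};x) + x`. -/
theorem pathPoly_deletion_contraction_extraction (D : MDigraph) (hwf : D.WellFormed)
    (e : ℕ) (he : e ∈ D.A) (hnl : ¬ D.IsLoop e) :
    D.pathPoly = (D.delArc e).pathPoly + Polynomial.X * (D.contractArc e).pathPoly
      - Polynomial.X * (D.extractArc e).pathPoly + Polynomial.X :=
  pathPoly_deletion_contraction_extraction_general D e he hnl
end

section
/- Let D=(V,E) be a finite multidigraph, let u,v ∈ V be distinct vertices, and suppose the arc (u,v) occurs with multiplicity n and the arc (v,u) occurs with multiplicity m in E. Let D₃ be the multidigraph obtained from D by deleting all n arcs (u,v) and all m arcs (v,u), let D₁ = D₃ with one arc (u,v) added, and let D₂ = D₃ with one arc (v,u) added. Then π(D;x) = n·π(D₁;x) + m·π(D₂;x) − (n+m−1)·π(D₃;x). -/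
open Classical

/-! Two arcs joining `u` and `v` never lie on a common directed path: parallel arcs share a
tail, and antiparallel arcs would make the path return to a vertex. So the paths of `D` are
those of `D₃` together with, for each of the `n + m` arcs `f` joining `u` and `v`, the paths
through `f`. After relabelling `f` as the new arc, the paths through an arc `(u,v)` are the
paths of `D₁` through its new arc, which number `p_k(D₁) − p_k(D₃)`; likewise for `(v,u)`. -/

namespace MDigraph

def restrict (D : MDigraph) (s : Finset ℕ) : MDigraph := ⟨D.V, s, D.ends⟩

@[simp] lemma restrict_A (D : MDigraph) (s : Finset ℕ) : (D.restrict s).A = s := rfl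

@[simp] lemma restrict_restrict (D : MDigraph) (s t : Finset ℕ) :
    (D.restrict s).restrict t = D.restrict t := rfl

noncomputable def pathThroughCount (D : MDigraph) (f k : ℕ) : ℕ :=
  (D.A.powerset.filter (fun P => IsPath D P k ∧ f ∈ P)).card

section IsPath

variable {D D' : MDigraph} {P : Finset ℕ} {k : ℕ}

lemma IsPath.subset_s5 (hP : IsPath D P k) : P ⊆ D.A := by
  obtain ⟨_, _, a, _, _, harc, rfl⟩ := hP
  intro g hg
  obtain ⟨i, hi, rfl⟩ := Finset.mem_image.mp hg
  exact (harc i (Finset.mem_range.mp hi)).1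

lemma IsPath.card_eq_s5 (hP : IsPath D P k) : P.card = k := by
  obtain ⟨-, -, a, -, ha, -, rfl⟩ := hP
  rw [Finset.card_image_of_injOn, Finset.card_range]
  intro i hi j hj hij
  exact ha i j (Finset.mem_range.mp hi) (Finset.mem_range.mp hj) hij

lemma IsPath.mono (hP : IsPath D P k) (h : ∀ a ∈ P, a ∈ D'.A ∧ D'.ends a = D.ends a) :
    IsPath D' P k := by
  obtain ⟨hk, w, a, hw, ha, harc, rfl⟩ := hP
  refine ⟨hk, w, a, hw, ha, fun i hi => ?_, rfl⟩
  obtain ⟨hmem, hends⟩ := h (a i) (Finset.mem_image_of_mem a (Finset.mem_range.mpr hi))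
  exact ⟨hmem, hends.trans (harc i hi).2⟩

lemma isPath_restrict_iff {s : Finset ℕ} (hs : s ⊆ D.A) :
    IsPath (D.restrict s) P k ↔ IsPath D P k ∧ P ⊆ s :=
  ⟨fun hP => ⟨hP.mono fun _ ha => ⟨hs (hP.subset_s5 ha), rfl⟩, hP.subset_s5⟩,
    fun ⟨hP, hPs⟩ => hP.mono fun _ ha => ⟨hPs ha, rfl⟩⟩

lemma IsPath.map (σ : ℕ ≃ ℕ) (hP : IsPath D P k)
    (h : ∀ a ∈ P, σ a ∈ D'.A ∧ D'.ends (σ a) = D.ends a) :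
    IsPath D' (P.map σ.toEmbedding) k := by
  obtain ⟨hk, w, a, hw, ha, harc, rfl⟩ := hP
  refine ⟨hk, w, σ ∘ a, hw, fun i j hi hj hij => ha i j hi hj (σ.injective hij),
    fun i hi => ?_, by rw [Finset.map_eq_image, Finset.image_image]; rfl⟩
  obtain ⟨hmem, hends⟩ := h (a i) (Finset.mem_image_of_mem a (Finset.mem_range.mpr hi))
  exact ⟨hmem, hends.trans (harc i hi).2⟩

lemma IsPath.eq_of_fst_eq (hP : IsPath D P k) {f g : ℕ} (hf : f ∈ P) (hg : g ∈ P)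
    (hfg : (D.ends f).1 = (D.ends g).1) : f = g := by
  obtain ⟨-, w, a, hw, -, harc, rfl⟩ := hP
  obtain ⟨i, hi, rfl⟩ := Finset.mem_image.mp hf
  obtain ⟨j, hj, rfl⟩ := Finset.mem_image.mp hg
  rw [Finset.mem_range] at hi hj
  rw [(harc i hi).2, (harc j hj).2] at hfg
  rw [hw i j hi.le hj.le hfg]

lemma IsPath.ends_ne_swap (hP : IsPath D P k) {f g : ℕ} (hf : f ∈ P) (hg : g ∈ P) :
    D.ends g ≠ (D.ends f).swap := by
  obtain ⟨-, w, a, hw, -, harc, rfl⟩ := hP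
  obtain ⟨i, hi, rfl⟩ := Finset.mem_image.mp hf
  obtain ⟨j, hj, rfl⟩ := Finset.mem_image.mp hg
  rw [Finset.mem_range] at hi hj
  rw [(harc i hi).2, (harc j hj).2, Prod.swap_prod_mk, Ne, Prod.mk.injEq]
  rintro ⟨h₁, h₂⟩
  have := hw j (i + 1) hj.le hi h₁
  have := hw (j + 1) i hj hi.le h₂
  omega

lemma IsPath.eq_of_ends_mem_pair (hP : IsPath D P k) {f g u v : ℕ} (hf : f ∈ P) (hg : g ∈ P)
    (hfe : D.ends f = (u, v) ∨ D.ends f = (v, u)) (hge : D.ends g = (u, v) ∨ D.ends g = (v, u)) :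
    f = g := by
  rcases hfe with hfe | hfe <;> rcases hge with hge | hge
  · exact hP.eq_of_fst_eq hf hg (by rw [hfe, hge])
  · exact absurd (by rw [hfe, hge]; rfl) (hP.ends_ne_swap hf hg)
  · exact absurd (by rw [hfe, hge]; rfl) (hP.ends_ne_swap hf hg)
  · exact hP.eq_of_fst_eq hf hg (by rw [hfe, hge])

end IsPath

lemma pathCount_eq_zero_of_card_lt_s5 (D : MDigraph) {k : ℕ} (hk : D.A.card < k) :
    pathCount D k = 0 := by
  rw [pathCount, Finset.card_eq_zero, Finset.filter_eq_empty_iff]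
  intro P _ hP
  have := Finset.card_le_card hP.subset_s5
  rw [hP.card_eq_s5] at this
  omega

lemma coeff_pathPoly_s5 (D : MDigraph) (k : ℕ) : D.pathPoly.coeff k = pathCount D k := by
  simp only [pathPoly, Polynomial.finsetSum_coeff, Polynomial.coeff_smul,
    Polynomial.coeff_X_pow, smul_eq_mul, mul_ite, mul_one, mul_zero, Finset.sum_ite_eq,
    Finset.mem_range]
  split_ifs with hk
  · rfl
  · rw [pathCount_eq_zero_of_card_lt_s5 D (by omega), Nat.cast_zero]

lemma pathCount_eq_of_equiv {D D' : MDigraph} (σ : ℕ ≃ ℕ) (hA : D.A.map σ.toEmbedding = D'.A)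
    (hends : ∀ a ∈ D.A, D'.ends (σ a) = D.ends a) (k : ℕ) :
    pathCount D k = pathCount D' k := by
  have hmem : ∀ b ∈ D'.A, σ.symm b ∈ D.A := by
    intro b hb
    rw [← hA] at hb
    obtain ⟨a, ha, rfl⟩ := Finset.mem_map.mp hb
    simpa using ha
  unfold pathCount
  refine Finset.card_nbij' (Finset.map σ.toEmbedding) (Finset.map σ.symm.toEmbedding)
    ?_ ?_ ?_ ?_
  · intro P hP
    simp only [Finset.coe_filter, Finset.mem_powerset, Set.mem_ofPred_eq] at hP ⊢
    refine ⟨hA ▸ Finset.map_subset_map.mpr hP.1, hP.2.map σ fun a ha => ?_⟩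
    exact ⟨hA ▸ Finset.mem_map_of_mem _ (hP.1 ha), hends a (hP.1 ha)⟩
  · intro Q hQ
    simp only [Finset.coe_filter, Finset.mem_powerset, Set.mem_ofPred_eq] at hQ ⊢
    refine ⟨fun a ha => ?_, hQ.2.map σ.symm fun b hb => ⟨hmem b (hQ.1 hb), ?_⟩⟩
    · obtain ⟨b, hb, rfl⟩ := Finset.mem_map.mp ha
      exact hmem b (hQ.1 hb)
    · simpa using (hends _ (hmem b (hQ.1 hb))).symm
  · intro P _
    simp [Finset.map_map]
  · intro Q _
    simp [Finset.map_map]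

lemma sup_id_add_one_notMem (s : Finset ℕ) : s.sup id + 1 ∉ s :=
  fun h => (Finset.le_sup (f := id) h).not_gt (Nat.lt_succ_self _)

lemma pathCount_addArc_restrict (D : MDigraph) {s : Finset ℕ} {f : ℕ} (hf : f ∉ s) (k : ℕ) :
    pathCount ((D.restrict s).addArc (D.ends f)) k = pathCount (D.restrict (insert f s)) k := by
  set e := s.sup id + 1
  have he : e ∉ s := sup_id_add_one_notMem s
  have hfix : ∀ a ∈ s, Equiv.swap f e a = a := fun a ha =>
    Equiv.swap_apply_of_ne_of_ne (ne_of_mem_of_not_mem ha hf) (ne_of_mem_of_not_mem ha he)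
  symm
  refine pathCount_eq_of_equiv (Equiv.swap f e) ?_ ?_ k
  · simp only [restrict, addArc, Finset.map_insert, Equiv.coe_toEmbedding,
      Equiv.swap_apply_left]
    congr 1
    rw [Finset.map_eq_image, Equiv.coe_toEmbedding, Finset.image_congr hfix, Finset.image_id']
  · intro a ha
    rcases Finset.mem_insert.mp ha with rfl | ha
    · simp [restrict, addArc, e]
    · simp only [restrict, addArc, hfix a ha]
      exact Function.update_of_ne (ne_of_mem_of_not_mem ha he) _ _

section Exclusive

variable {D : MDigraph} {S : Finset ℕ} {k : ℕ}

lemma pathCount_eq_add_sum_pathThroughCount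
    (hS : ∀ P, IsPath D P k → ∀ f ∈ S, ∀ g ∈ S, f ∈ P → g ∈ P → f = g) :
    pathCount D k = pathCount (D.restrict (D.A \ S)) k + ∑ f ∈ S, pathThroughCount D f k := by
  have havoid : D.A.powerset.filter (fun P => IsPath D P k ∧ ¬ ∃ f ∈ S, f ∈ P)
      = (D.A \ S).powerset.filter (fun P => IsPath (D.restrict (D.A \ S)) P k) := by
    ext P
    simp only [Finset.mem_filter, Finset.mem_powerset, isPath_restrict_iff Finset.sdiff_subset]
    constructor
    · rintro ⟨-, hP, hPS⟩
      have hPs : P ⊆ D.A \ S := fun f hf =>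
        Finset.mem_sdiff.mpr ⟨hP.subset_s5 hf, fun hfS => hPS ⟨f, hfS, hf⟩⟩
      exact ⟨hPs, hP, hPs⟩
    · rintro ⟨-, hP, hPs⟩
      exact ⟨hP.subset_s5, hP, fun ⟨f, hfS, hf⟩ => (Finset.mem_sdiff.mp (hPs hf)).2 hfS⟩
  have hmeet : D.A.powerset.filter (fun P => IsPath D P k ∧ ∃ f ∈ S, f ∈ P)
      = S.biUnion (fun f => D.A.powerset.filter (fun P => IsPath D P k ∧ f ∈ P)) := by
    ext P
    simp only [Finset.mem_filter, Finset.mem_biUnion]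
    exact ⟨fun ⟨hPA, hP, f, hf, hfP⟩ => ⟨f, hf, hPA, hP, hfP⟩,
      fun ⟨f, hf, hPA, hP, hfP⟩ => ⟨hPA, hP, f, hf, hfP⟩⟩
  have hdisj : (S : Set ℕ).PairwiseDisjoint
      (fun f => D.A.powerset.filter (fun P => IsPath D P k ∧ f ∈ P)) := by
    intro f hf g hg hfg
    simp only [Function.onFun, Finset.disjoint_filter]
    exact fun P _ ⟨hP, hfP⟩ ⟨_, hgP⟩ => hfg (hS P hP f hf g hg hfP hgP)
  rw [pathCount, pathCount, ← Finset.card_filter_add_card_filter_not (fun P => ∃ f ∈ S, f ∈ P),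
    Finset.filter_filter, Finset.filter_filter, havoid, hmeet, Finset.card_biUnion hdisj, add_comm]
  rfl

lemma pathThroughCount_restrict {s : Finset ℕ} {f : ℕ} (hs : s ⊆ D.A)
    (h : ∀ P, IsPath D P k → f ∈ P → P ⊆ s) :
    pathThroughCount (D.restrict s) f k = pathThroughCount D f k := by
  unfold pathThroughCount
  congr 1
  ext P
  simp only [Finset.mem_filter, Finset.mem_powerset, isPath_restrict_iff hs]
  exact ⟨fun ⟨_, ⟨hP, _⟩, hfP⟩ => ⟨hP.subset_s5, hP, hfP⟩,
    fun ⟨_, hP, hfP⟩ => ⟨h P hP hfP, ⟨hP, h P hP hfP⟩, hfP⟩⟩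

/-- The paths of `D` avoiding `S` are counted once on the left and `#S + 1` times on the
right; a path through `f ∈ S` is counted once on each side, by `D.restrict (insert f (D.A \ S))`. -/
lemma pathCount_add_card_mul (hSA : S ⊆ D.A)
    (hS : ∀ P, IsPath D P k → ∀ f ∈ S, ∀ g ∈ S, f ∈ P → g ∈ P → f = g) :
    pathCount D k + S.card * pathCount (D.restrict (D.A \ S)) k
      = pathCount (D.restrict (D.A \ S)) k
        + ∑ f ∈ S, pathCount (D.restrict (insert f (D.A \ S))) k := by
  have hthrough : ∀ f ∈ S, pathCount (D.restrict (insert f (D.A \ S))) k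
      = pathCount (D.restrict (D.A \ S)) k + pathThroughCount D f k := by
    intro f hf
    have hfS : f ∉ D.A \ S := fun h => (Finset.mem_sdiff.mp h).2 hf
    have hs : insert f (D.A \ S) ⊆ D.A := Finset.insert_subset (hSA hf) Finset.sdiff_subset
    have hPs : ∀ P, IsPath D P k → f ∈ P → P ⊆ insert f (D.A \ S) := fun P hP hfP g hg =>
      Finset.mem_insert.mpr (or_iff_not_imp_left.mpr fun hgf =>
        Finset.mem_sdiff.mpr ⟨hP.subset_s5 hg, fun hgS => hgf (hS P hP g hgS f hf hg hfP)⟩)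
    have hsplit := pathCount_eq_add_sum_pathThroughCount (D := D.restrict (insert f (D.A \ S)))
      (S := {f}) (k := k) (by simp)
    rwa [Finset.sum_singleton, pathThroughCount_restrict hs hPs, Finset.sdiff_singleton_eq_erase,
      restrict_restrict, restrict_A, Finset.erase_insert hfS] at hsplit
  rw [Finset.sum_congr rfl hthrough, Finset.sum_add_distrib, Finset.sum_const, smul_eq_mul,
    pathCount_eq_add_sum_pathThroughCount hS]
  ring

end Exclusive

end MDigraph

open MDigraph

theorem pathPoly_parallel_reduction_general (D : MDigraph)
    (u v : ℕ) (huv : u ≠ v) (n m : ℕ)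
    (hn : (D.A.filter (fun a => D.ends a = (u, v))).card = n)
    (hm : (D.A.filter (fun a => D.ends a = (v, u))).card = m)
    (D₃ : MDigraph)
    (hD₃ : D₃ = ⟨D.V, D.A.filter (fun a => D.ends a ≠ (u, v) ∧ D.ends a ≠ (v, u)), D.ends⟩) :
    D.pathPoly = (n : ℝ) • (D₃.addArc (u, v)).pathPoly + (m : ℝ) • (D₃.addArc (v, u)).pathPoly
      - ((n : ℝ) + (m : ℝ) - 1) • D₃.pathPoly := by
  set S₁ := D.A.filter (fun a => D.ends a = (u, v))
  set S₂ := D.A.filter (fun a => D.ends a = (v, u))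
  have hdisj : Disjoint S₁ S₂ := Finset.disjoint_filter.mpr fun _ _ h₁ h₂ =>
    huv (congrArg Prod.fst (h₁.symm.trans h₂))
  have hD₃S : D₃ = D.restrict (D.A \ (S₁ ∪ S₂)) := by
    rw [hD₃, restrict, ← Finset.filter_or, ← Finset.filter_not]
    simp only [not_or]
  have hexcl (k : ℕ) (P : Finset ℕ) (hP : IsPath D P k) :
      ∀ f ∈ S₁ ∪ S₂, ∀ g ∈ S₁ ∪ S₂, f ∈ P → g ∈ P → f = g := by
    intro f hf g hg hfP hgP
    simp only [Finset.mem_union, Finset.mem_filter, S₁, S₂] at hf hg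
    exact hP.eq_of_ends_mem_pair hfP hgP (hf.imp And.right And.right) (hg.imp And.right And.right)
  have hrelabel (k : ℕ) (p : ℕ × ℕ) :
      ∀ f ∈ D.A.filter (fun a => D.ends a = p), f ∈ S₁ ∪ S₂ →
        pathCount (D.restrict (insert f (D.A \ (S₁ ∪ S₂)))) k = pathCount (D₃.addArc p) k := by
    intro f hf hfS
    rw [hD₃S, ← (Finset.mem_filter.mp hf).2,
      pathCount_addArc_restrict D (fun h => (Finset.mem_sdiff.mp h).2 hfS)]
  ext k
  have key := pathCount_add_card_mul (Finset.union_subset (Finset.filter_subset _ _)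
    (Finset.filter_subset _ _)) (hexcl k)
  rw [Finset.card_union_of_disjoint hdisj, Finset.sum_union hdisj,
    Finset.sum_congr rfl fun f hf => hrelabel k (u, v) f hf (Finset.mem_union_left _ hf),
    Finset.sum_congr rfl fun f hf => hrelabel k (v, u) f hf (Finset.mem_union_right _ hf),
    Finset.sum_const, Finset.sum_const, hn, hm, ← hD₃S] at key
  simp only [Polynomial.coeff_sub, Polynomial.coeff_add, Polynomial.coeff_smul, coeff_pathPoly_s5,
    smul_eq_mul]
  have key' := congrArg (Nat.cast : ℕ → ℝ) key
  push_cast [smul_eq_mul] at key'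
  linear_combination key'

/-- if the arc `(u,v)` has multiplicity `n` and the arc `(v,u)` has
multiplicity `m` in `D` (`u ≠ v`), `D₃` is `D` with all these arcs deleted,
`D₁ = D₃ + (u,v)` and `D₂ = D₃ + (v,u)`, then
`π(D;x) = n·π(D₁;x) + m·π(D₂;x) − (n+m−1)·π(D₃;x)`. -/
theorem pathPoly_parallel_reduction (D : MDigraph) (hwf : D.WellFormed)
    (u v : ℕ) (hu : u ∈ D.V) (hv : v ∈ D.V) (huv : u ≠ v) (n m : ℕ)
    (hn : (D.A.filter (fun a => D.ends a = (u, v))).card = n)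
    (hm : (D.A.filter (fun a => D.ends a = (v, u))).card = m)
    (D₃ : MDigraph)
    (hD₃ : D₃ = ⟨D.V, D.A.filter (fun a => D.ends a ≠ (u, v) ∧ D.ends a ≠ (v, u)), D.ends⟩) :
    D.pathPoly = (n : ℝ) • (D₃.addArc (u, v)).pathPoly + (m : ℝ) • (D₃.addArc (v, u)).pathPoly
      - ((n : ℝ) + (m : ℝ) - 1) • D₃.pathPoly :=
  pathPoly_parallel_reduction_general D u v huv n m hn hm D₃ hD₃
end

section
/- Let D=(V,E) be a finite multidigraph and let e be a loop of D. Then σ̂(D;x,y) = σ̂(D_{-e};x,y) + x·y·σ̂(D_{/e};x,y). -/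
open Classical

/-!
Split the arc sets `F` indexing `σ̂(D)` according to whether they contain the loop `e` at `u`.
Those avoiding `e` are exactly the index sets of `σ̂(D_{-e})`, with the same cycles. Those
containing `e` can contain no other arc at `u` (in- and out-degrees are at most one), so
`F ↦ F \ {e}` is a bijection onto the index sets of `σ̂(D_{/e})`, where `D_{/e}` is `D` with `u`
deleted; the loop adds one arc and one cycle component, hence the factor `x y`.
-/

theorem Finset.card_filter_le_one_iff_injOn {α β : Type*} [DecidableEq β] (f : α → β)
    (s : Finset α) :
    (∀ b, (s.filter (fun a => f a = b)).card ≤ 1) ↔ Set.InjOn f s := by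
  refine ⟨fun h a ha a' ha' haa' => ?_, fun h b => Finset.card_le_one.mpr fun a ha a' ha' => ?_⟩
  · exact Finset.card_le_one.mp (h (f a')) a (by simp [Finset.mem_coe.mp ha, haa'])
      a' (by simp [Finset.mem_coe.mp ha'])
  · simp only [Finset.mem_filter] at ha ha'
    exact h ha.1 ha'.1 (ha.2.trans ha'.2.symm)

namespace MDigraph

open MvPolynomial

noncomputable def cyclePackings (D : MDigraph) : Finset (Finset ℕ) :=
  D.A.powerset.filter (fun F => DegOK D F ∧ kpF D F = 0)

noncomputable def cycWeight (D : MDigraph) (F : Finset ℕ) : MvPolynomial (Fin 2) ℝ :=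
  X 0 ^ F.card * X 1 ^ kcF D F

theorem biCycPoly_eq_sum (D : MDigraph) :
    D.biCycPoly = ∑ F ∈ D.cyclePackings, D.cycWeight F := rfl

theorem mem_cyclePackings {D : MDigraph} {F : Finset ℕ} :
    F ∈ D.cyclePackings ↔ F ⊆ D.A ∧ DegOK D F ∧ kpF D F = 0 := by
  rw [cyclePackings, Finset.mem_filter, Finset.mem_powerset]

theorem degOK_iff_injOn (D : MDigraph) (F : Finset ℕ) :
    DegOK D F ↔ Set.InjOn (fun a => (D.ends a).1) F ∧ Set.InjOn (fun a => (D.ends a).2) F := by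
  simp only [← Finset.card_filter_le_one_iff_injOn, DegOK, forall_and]

theorem degOK_insert_iff {D : MDigraph} {F : Finset ℕ} {e : ℕ} (he : e ∉ F) :
    DegOK D (insert e F) ↔ DegOK D F ∧ ∀ a ∈ F, (D.ends a).1 ≠ (D.ends e).1 ∧
      (D.ends a).2 ≠ (D.ends e).2 := by
  simp only [degOK_iff_injOn, Finset.coe_insert,
    Set.injOn_insert (Finset.mem_coe.not.mpr he), Set.mem_image, Finset.mem_coe, not_exists,
    not_and, ne_eq, forall₂_and]
  tauto

theorem kpF_insert_loop {D : MDigraph} {F : Finset ℕ} {e : ℕ} (hl : D.IsLoop e)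
    (hF : ∀ a ∈ F, (D.ends a).1 ≠ (D.ends e).1) : kpF D (insert e F) = kpF D F := by
  have hl' : (D.ends e).2 = (D.ends e).1 := hl.symm
  unfold kpF
  rw [Finset.image_insert, Finset.filter_insert, if_neg]
  · congr 1
    refine Finset.filter_congr fun w hw => ?_
    obtain ⟨a, ha, rfl⟩ := Finset.mem_image.mp hw
    rw [Finset.filter_insert, if_neg fun h => hF a ha (h.symm.trans hl')]
  · exact Finset.card_ne_zero_of_mem (Finset.mem_filter.mpr ⟨Finset.mem_insert_self _ _, hl'⟩)

theorem IsCycle.mono {D₁ D₂ : MDigraph} (hends : D₁.ends = D₂.ends) {C : Finset ℕ} {k : ℕ}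
    (h : IsCycle D₁ C k) (hC : C ⊆ D₂.A) : IsCycle D₂ C k := by
  obtain ⟨hk, v, a, hv, ha, harc, rfl⟩ := h
  exact ⟨hk, v, a, hv, ha, fun i hi =>
    ⟨hC (Finset.mem_image_of_mem _ (Finset.mem_range.mpr hi)), hends ▸ (harc i hi).2⟩, rfl⟩

theorem kcF_congr {D₁ D₂ : MDigraph} (hends : D₁.ends = D₂.ends) {F : Finset ℕ}
    (h₁ : F ⊆ D₁.A) (h₂ : F ⊆ D₂.A) : kcF D₁ F = kcF D₂ F := by
  unfold kcF
  congr 1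
  refine Finset.filter_congr fun C hC => ⟨fun ⟨k, h⟩ => ⟨k, h.mono hends ?_⟩,
    fun ⟨k, h⟩ => ⟨k, h.mono hends.symm ?_⟩⟩
  all_goals exact (Finset.mem_powerset.mp hC).trans ‹_›

theorem IsCycle.eq_singleton_of_isLoop {D : MDigraph} {C : Finset ℕ} {k e : ℕ}
    (hC : IsCycle D C k) (heC : e ∈ C) (hl : D.IsLoop e) : C = {e} := by
  obtain ⟨hk, v, a, hv, ha, harc, rfl⟩ := hC
  obtain ⟨i, hi, rfl⟩ := Finset.mem_image.mp heC
  rw [Finset.mem_range] at hi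
  have hwrap : i = (i + 1) % k := by
    rw [IsLoop, (harc i hi).2] at hl
    exact hv i _ hi (Nat.mod_lt _ (by omega)) hl
  obtain rfl : k = 1 := by
    rcases Nat.lt_or_ge (i + 1) k with h | h
    · rw [Nat.mod_eq_of_lt h] at hwrap; omega
    · rw [show i + 1 = k by omega, Nat.mod_self] at hwrap; omega
  obtain rfl : i = 0 := by omega
  rfl

theorem isCycle_singleton_of_isLoop {D : MDigraph} {e : ℕ} (he : e ∈ D.A) (hl : D.IsLoop e) :
    IsCycle D {e} 1 :=
  ⟨le_rfl, fun _ => (D.ends e).1, fun _ => e, by omega, by omega,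
    fun _ _ => ⟨he, Prod.ext rfl hl.symm⟩, rfl⟩

theorem kcF_insert_loop {D : MDigraph} {F : Finset ℕ} {e : ℕ} (he : e ∈ D.A) (hl : D.IsLoop e)
    (heF : e ∉ F) : kcF D (insert e F) = kcF D F + 1 := by
  have hcycles : (insert e F).powerset.filter (fun C => ∃ k, IsCycle D C k) =
      insert {e} (F.powerset.filter (fun C => ∃ k, IsCycle D C k)) := by
    ext C
    simp only [Finset.mem_filter, Finset.mem_powerset, Finset.mem_insert]
    constructor
    · rintro ⟨hCF, k, hC⟩
      by_cases heC : e ∈ C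
      · exact .inl (hC.eq_singleton_of_isLoop heC hl)
      · exact .inr ⟨(Finset.subset_insert_iff_of_notMem heC).mp hCF, k, hC⟩
    · rintro (rfl | ⟨hCF, hC⟩)
      · exact ⟨by simp, 1, isCycle_singleton_of_isLoop he hl⟩
      · exact ⟨hCF.trans (Finset.subset_insert _ _), hC⟩
  unfold kcF
  rw [hcycles, Finset.card_insert_of_notMem]
  simp [heF]

theorem contractArc_of_isLoop {D : MDigraph} {e : ℕ} (hl : D.IsLoop e) :
    D.contractArc e = D.delVertex (D.ends e).1 := by
  simp only [contractArc, delVertex]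
  exact if_pos hl

theorem biCycPoly_delArc_eq_sum (D : MDigraph) (e : ℕ) :
    (D.delArc e).biCycPoly = ∑ F ∈ D.cyclePackings.filter (e ∉ ·), D.cycWeight F := by
  have hpackings : (D.delArc e).cyclePackings = D.cyclePackings.filter (e ∉ ·) := by
    ext F
    simp only [Finset.mem_filter, mem_cyclePackings, delArc, Finset.subset_erase]
    tauto
  rw [biCycPoly_eq_sum, hpackings]
  refine Finset.sum_congr rfl fun F hF => ?_
  have hFA : F ⊆ D.A.erase e := (mem_cyclePackings.mp (hpackings ▸ hF)).1
  rw [cycWeight, cycWeight,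
    kcF_congr (D₁ := D.delArc e) (D₂ := D) rfl hFA (hFA.trans (Finset.erase_subset _ _))]

theorem subset_delVertex_arcs_iff {D : MDigraph} {F : Finset ℕ} {u : ℕ} :
    F ⊆ (D.delVertex u).A ↔ F ⊆ D.A ∧ ∀ a ∈ F, (D.ends a).1 ≠ u ∧ (D.ends a).2 ≠ u := by
  simp only [delVertex, Finset.subset_iff, Finset.mem_filter]
  exact ⟨fun h => ⟨fun a ha => (h ha).1, fun a ha => (h ha).2⟩,
    fun h a ha => ⟨h.1 ha, h.2 a ha⟩⟩

theorem notMem_delVertex_arcs (D : MDigraph) (e : ℕ) : e ∉ (D.delVertex (D.ends e).1).A :=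
  fun h => (Finset.mem_filter.mp h).2.1 rfl

theorem insert_mem_cyclePackings_iff {D : MDigraph} {F : Finset ℕ} {e : ℕ} (he : e ∈ D.A)
    (hl : D.IsLoop e) (heF : e ∉ F) :
    insert e F ∈ D.cyclePackings ↔ F ∈ (D.delVertex (D.ends e).1).cyclePackings := by
  have hl' : (D.ends e).2 = (D.ends e).1 := hl.symm
  rw [mem_cyclePackings, mem_cyclePackings, subset_delVertex_arcs_iff, Finset.insert_subset_iff,
    degOK_insert_iff heF, hl']
  constructor
  · rintro ⟨⟨-, hFA⟩, ⟨hdeg, havoid⟩, hkp⟩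
    exact ⟨⟨hFA, havoid⟩, hdeg, kpF_insert_loop hl (fun a ha => (havoid a ha).1) ▸ hkp⟩
  · rintro ⟨⟨hFA, havoid⟩, hdeg, hkp⟩
    exact ⟨⟨he, hFA⟩, ⟨hdeg, havoid⟩,
      (kpF_insert_loop hl (fun a ha => (havoid a ha).1)).trans hkp⟩

theorem cycWeight_insert_loop {D : MDigraph} {F : Finset ℕ} {e : ℕ} (he : e ∈ D.A)
    (hl : D.IsLoop e) (hF : F ⊆ (D.delVertex (D.ends e).1).A) :
    D.cycWeight (insert e F) = X 0 * X 1 * (D.delVertex (D.ends e).1).cycWeight F := by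
  have heF : e ∉ F := fun h => notMem_delVertex_arcs D e (hF h)
  rw [cycWeight, cycWeight, Finset.card_insert_of_notMem heF, kcF_insert_loop he hl heF,
    kcF_congr (D₁ := D) (D₂ := D.delVertex _) rfl (hF.trans (Finset.filter_subset _ _)) hF]
  ring

theorem mul_biCycPoly_delVertex_eq_sum {D : MDigraph} {e : ℕ} (he : e ∈ D.A)
    (hl : D.IsLoop e) : X 0 * X 1 * (D.delVertex (D.ends e).1).biCycPoly =
      ∑ F ∈ D.cyclePackings.filter (e ∈ ·), D.cycWeight F := by
  have hnotMem {F} (hF : F ∈ (D.delVertex (D.ends e).1).cyclePackings) : e ∉ F :=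
    fun h => notMem_delVertex_arcs D e ((mem_cyclePackings.mp hF).1 h)
  rw [biCycPoly_eq_sum, Finset.mul_sum]
  refine Finset.sum_nbij' (insert e) (fun F => F.erase e) (fun F hF => ?_) (fun F hF => ?_)
    (fun F hF => Finset.erase_insert (hnotMem hF)) (fun F hF => ?_)
    (fun F hF => (cycWeight_insert_loop he hl (mem_cyclePackings.mp hF).1).symm)
  · simp only [Finset.mem_filter, Finset.mem_insert_self, and_true,
      insert_mem_cyclePackings_iff he hl (hnotMem hF), hF]
  · obtain ⟨hF, heF⟩ := Finset.mem_filter.mp hF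
    rw [← insert_mem_cyclePackings_iff he hl (Finset.notMem_erase e F),
      Finset.insert_erase heF]
    exact hF
  · exact Finset.insert_erase (Finset.mem_filter.mp hF).2

end MDigraph

theorem biCycPoly_loop_general (D : MDigraph)
    (e : ℕ) (he : e ∈ D.A) (hloop : D.IsLoop e) :
    D.biCycPoly = (D.delArc e).biCycPoly +
      MvPolynomial.X 0 * MvPolynomial.X 1 * (D.contractArc e).biCycPoly := by
  rw [MDigraph.contractArc_of_isLoop hloop, MDigraph.biCycPoly_delArc_eq_sum,
    MDigraph.mul_biCycPoly_delVertex_eq_sum he hloop, MDigraph.biCycPoly_eq_sum,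
    Finset.sum_filter_not_add_sum_filter]

/-- for a loop `e` of `D`,
`σ̂(D;x,y) = σ̂(D_{-e};x,y) + x·y·σ̂(D_{/e};x,y)`. -/
theorem biCycPoly_loop (D : MDigraph) (hwf : D.WellFormed)
    (e : ℕ) (he : e ∈ D.A) (hloop : D.IsLoop e) :
    D.biCycPoly = (D.delArc e).biCycPoly +
      MvPolynomial.X 0 * MvPolynomial.X 1 * (D.contractArc e).biCycPoly :=
  biCycPoly_loop_general D e he hloop
end
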